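/- Under (H1), (H2) and (HC), the family (ϑ^π)_π satisfies a uniform linear growth condition: there exists a constant C independent of π such that |ϑ^π(t,x,a)| ≤ C(1+|x|) for every (t,x,a)∈[0,T]×ℝ^d×A and every grid π. -/

import Mathlib

open MeasureTheory ProbabilityTheory Set Filter
open scoped ENNReal NNReal Topology Classical

noncomputable section

namespace HJBPaper

/-- Euclidean state space `ℝ^d`. -/
abbrev Euc (d : ℕ) : Type := EuclideanSpace ℝ (Fin d)

/-- Second directional derivative of a real-valued function. -/
def D2 {V : Type*} [NormedAddCommGroup V] [NormedSpace ℝ V]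
    (ψ : V → ℝ) (x u v : V) : ℝ :=
  fderiv ℝ (fun y => fderiv ℝ ψ y v) x u

variable {d q : ℕ}

/-- The Dynkin operator `L^a φ = ∂_t φ + b(x,a)·D_x φ + ½ tr(σσᵀ(x,a) D_x² φ)`. -/
def Lgen (b : Euc d → Euc q → Euc d) (σ : Euc d → Euc q → (Euc d →L[ℝ] Euc d))
    (a : Euc q) (φ : ℝ → Euc d → ℝ) (t : ℝ) (x : Euc d) : ℝ :=
  deriv (fun s => φ s x) t + fderiv ℝ (φ t) x (b x a)
    + (1 / 2) * ∑ i : Fin d,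
        D2 (φ t) x (σ x a (EuclideanSpace.single i 1)) (σ x a (EuclideanSpace.single i 1))

/-- `σᵀ(x,a) D_x φ (x)` as a vector of `ℝ^d`. -/
def sigmaTGrad (σ : Euc d → Euc q → (Euc d →L[ℝ] Euc d)) (a : Euc q)
    (φ : Euc d → ℝ) (x : Euc d) : Euc d :=
  (EuclideanSpace.equiv (Fin d) ℝ).symm
    fun i => fderiv ℝ φ x (σ x a (EuclideanSpace.single i 1))

/-- Nonlocal (switching) term `∫_A (u(t,x,a') - u(t,x,a)) λ(da')`. -/
def NL (lam : Measure (Euc q)) (u : ℝ → Euc d → Euc q → ℝ)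
    (t : ℝ) (x : Euc d) (a : Euc q) : ℝ :=
  ∫ a', (u t x a' - u t x a) ∂lam

/-- Viscosity subsolution on `[s,r) × ℝ^d × A` of
`-L^a u - f(x,a,u,σᵀD_x u) - ∫_A (u(t,x,a') - u(t,x,a)) λ(da') = 0`. -/
def SubsolIPDE (A : Set (Euc q)) (lam : Measure (Euc q))
    (b : Euc d → Euc q → Euc d) (σ : Euc d → Euc q → (Euc d →L[ℝ] Euc d))
    (f : Euc d → Euc q → ℝ → Euc d → ℝ)
    (s r : ℝ) (u : ℝ → Euc d → Euc q → ℝ) : Prop :=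
  ∀ a ∈ A, ∀ t₀ ∈ Ico s r, ∀ x₀ : Euc d, ∀ φ : ℝ → Euc d → ℝ,
    ContDiff ℝ (⊤ : ℕ∞) (fun p : ℝ × Euc d => φ p.1 p.2) →
    (∀ t ∈ Ico s r, ∀ x : Euc d, u t x a - φ t x ≤ u t₀ x₀ a - φ t₀ x₀) →
    0 ≤ Lgen b σ a φ t₀ x₀ + f x₀ a (u t₀ x₀ a) (sigmaTGrad σ a (φ t₀) x₀)
        + NL lam u t₀ x₀ a

/-- Viscosity supersolution on `[s,r) × ℝ^d × A` of the same IPDE. -/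
def SupersolIPDE (A : Set (Euc q)) (lam : Measure (Euc q))
    (b : Euc d → Euc q → Euc d) (σ : Euc d → Euc q → (Euc d →L[ℝ] Euc d))
    (f : Euc d → Euc q → ℝ → Euc d → ℝ)
    (s r : ℝ) (u : ℝ → Euc d → Euc q → ℝ) : Prop :=
  ∀ a ∈ A, ∀ t₀ ∈ Ico s r, ∀ x₀ : Euc d, ∀ φ : ℝ → Euc d → ℝ,
    ContDiff ℝ (⊤ : ℕ∞) (fun p : ℝ × Euc d => φ p.1 p.2) →
    (∀ t ∈ Ico s r, ∀ x : Euc d, u t₀ x₀ a - φ t₀ x₀ ≤ u t x a - φ t x) →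
    Lgen b σ a φ t₀ x₀ + f x₀ a (u t₀ x₀ a) (sigmaTGrad σ a (φ t₀) x₀)
        + NL lam u t₀ x₀ a ≤ 0

/-- `w` is the (continuous, linear-growth) viscosity solution of the IPDE on
`[s,r) × ℝ^d × A` with terminal data `ψ` at time `r`; this characterizes the
operator `𝕋^k_π[ψ] = w` of the paper. -/
structure IsIPDESolOn (A : Set (Euc q)) (lam : Measure (Euc q))
    (b : Euc d → Euc q → Euc d) (σ : Euc d → Euc q → (Euc d →L[ℝ] Euc d))
    (f : Euc d → Euc q → ℝ → Euc d → ℝ)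
    (s r : ℝ) (ψ : Euc d → Euc q → ℝ) (w : ℝ → Euc d → Euc q → ℝ) : Prop where
  cont : ContinuousOn (fun p : ℝ × Euc d × Euc q => w p.1 p.2.1 p.2.2)
      (Icc s r ×ˢ (univ : Set (Euc d)) ×ˢ A)
  growth : ∃ C, ∀ t ∈ Icc s r, ∀ x : Euc d, ∀ a ∈ A, |w t x a| ≤ C * (1 + ‖x‖)
  subsol : SubsolIPDE A lam b σ f s r w
  supersol : SupersolIPDE A lam b σ f s r w
  terminal : ∀ x : Euc d, ∀ a ∈ A, w r x a = ψ x a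

/-- A grid `π = {0 = t₀ < t₁ < ⋯ < t_n = T}` of `[0,T]`. -/
structure Grid (T : ℝ) (n : ℕ) where
  t : Fin (n + 1) → ℝ
  mono : StrictMono t
  h0 : t 0 = 0
  hT : t (Fin.last n) = T

/-- The modulus `|π| = max_k (t_{k+1} - t_k)` of a grid. -/
def Grid.mesh {T : ℝ} {n : ℕ} (π : Grid T n) : ℝ :=
  ⨆ k : Fin n, (π.t k.succ - π.t k.castSucc)

/-- `ℕ`-indexed (clamped) grid times. -/
def Grid.tc {T : ℝ} {n : ℕ} (π : Grid T n) (j : ℕ) : ℝ :=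
  π.t ⟨min j n, Nat.lt_succ_of_le (Nat.min_le_right _ _)⟩

/-- (H1): Lipschitz condition on the coefficients `b, σ`. -/
def H1 (A : Set (Euc q)) (b : Euc d → Euc q → Euc d)
    (σ : Euc d → Euc q → (Euc d →L[ℝ] Euc d)) (L₁ : ℝ) : Prop :=
  ∀ x x' : Euc d, ∀ a ∈ A, ∀ a' ∈ A,
    ‖b x a - b x' a'‖ + ‖σ x a - σ x' a'‖ ≤ L₁ * (‖x - x'‖ + ‖a - a'‖)

/-- (H2): Lipschitz condition on the generator `f` and terminal function `g`. -/
def H2 (A : Set (Euc q)) (f : Euc d → Euc q → ℝ → Euc d → ℝ) (g : Euc d → ℝ)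
    (L₂ : ℝ) : Prop :=
  ∀ x x' : Euc d, ∀ a ∈ A, ∀ a' ∈ A, ∀ y y' : ℝ, ∀ z z' : Euc d,
    |f x a y z - f x' a' y' z'| + |g x - g x'|
      ≤ L₂ * (‖x - x'‖ + ‖a - a'‖ + |y - y'| + ‖z - z'‖)

/-- `ϑ^π`: the unique viscosity solution with linear growth of the backward
recursive system of IPDEs (3.8)-(3.9) on the grid `π`. -/
structure IsTheta (A : Set (Euc q)) (lam : Measure (Euc q))
    (b : Euc d → Euc q → Euc d) (σ : Euc d → Euc q → (Euc d →L[ℝ] Euc d))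
    (f : Euc d → Euc q → ℝ → Euc d → ℝ) (g : Euc d → ℝ)
    {T : ℝ} {n : ℕ} (π : Grid T n) (ϑ : ℝ → Euc d → Euc q → ℝ) : Prop where
  growth : ∃ C, ∀ t ∈ Icc 0 T, ∀ x : Euc d, ∀ a ∈ A, |ϑ t x a| ≤ C * (1 + ‖x‖)
  terminal : ∀ x : Euc d, ∀ a ∈ A, ϑ T x a = g x
  sol : ∀ k : Fin n, ∃ w, IsIPDESolOn A lam b σ f (π.t k.castSucc) (π.t k.succ)
      (fun x _ => ⨆ a' : A, ϑ (π.t k.succ) x ↑a') w ∧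
    ∀ t ∈ Ico (π.t k.castSucc) (π.t k.succ), ∀ x : Euc d, ∀ a ∈ A, ϑ t x a = w t x a

/-- `v^π`, defined from `ϑ^π` by taking the sup over the regimes at grid times. -/
def vpi (A : Set (Euc q)) {T : ℝ} {n : ℕ} (π : Grid T n)
    (ϑ : ℝ → Euc d → Euc q → ℝ) (t : ℝ) (x : Euc d) (a : Euc q) : ℝ :=
  if ∃ k, π.t k = t then ⨆ a' : A, ϑ t x ↑a' else ϑ t x a

/-- Viscosity subsolution of the HJB equation
`-∂_t u - sup_a [b·D_x u + ½tr(σσᵀD_x²u) + f(x,a,u,σᵀD_x u)] = 0` on `[0,T) × ℝ^d`. -/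
def SubsolHJB (T : ℝ) (A : Set (Euc q)) (b : Euc d → Euc q → Euc d)
    (σ : Euc d → Euc q → (Euc d →L[ℝ] Euc d))
    (f : Euc d → Euc q → ℝ → Euc d → ℝ) (u : ℝ → Euc d → ℝ) : Prop :=
  ∀ t₀ ∈ Ico (0 : ℝ) T, ∀ x₀ : Euc d, ∀ φ : ℝ → Euc d → ℝ,
    ContDiff ℝ (⊤ : ℕ∞) (fun p : ℝ × Euc d => φ p.1 p.2) →
    (∀ t ∈ Ico (0 : ℝ) T, ∀ x : Euc d, u t x - φ t x ≤ u t₀ x₀ - φ t₀ x₀) →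
    0 ≤ ⨆ a : A, (Lgen b σ (↑a) φ t₀ x₀ + f x₀ (↑a) (u t₀ x₀) (sigmaTGrad σ (↑a) (φ t₀) x₀))

/-- Viscosity supersolution of the HJB equation. -/
def SupersolHJB (T : ℝ) (A : Set (Euc q)) (b : Euc d → Euc q → Euc d)
    (σ : Euc d → Euc q → (Euc d →L[ℝ] Euc d))
    (f : Euc d → Euc q → ℝ → Euc d → ℝ) (u : ℝ → Euc d → ℝ) : Prop :=
  ∀ t₀ ∈ Ico (0 : ℝ) T, ∀ x₀ : Euc d, ∀ φ : ℝ → Euc d → ℝ,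
    ContDiff ℝ (⊤ : ℕ∞) (fun p : ℝ × Euc d => φ p.1 p.2) →
    (∀ t ∈ Ico (0 : ℝ) T, ∀ x : Euc d, u t₀ x₀ - φ t₀ x₀ ≤ u t x - φ t x) →
    ⨆ a : A, (Lgen b σ (↑a) φ t₀ x₀ + f x₀ (↑a) (u t₀ x₀) (sigmaTGrad σ (↑a) (φ t₀) x₀)) ≤ 0

/-- `v` is the (continuous, linear growth) viscosity solution of the HJB equation
with terminal data `g`. -/
structure IsHJBSol (T : ℝ) (A : Set (Euc q)) (b : Euc d → Euc q → Euc d)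
    (σ : Euc d → Euc q → (Euc d →L[ℝ] Euc d))
    (f : Euc d → Euc q → ℝ → Euc d → ℝ) (g : Euc d → ℝ) (v : ℝ → Euc d → ℝ) : Prop where
  cont : ContinuousOn (fun p : ℝ × Euc d => v p.1 p.2) (Icc 0 T ×ˢ (univ : Set (Euc d)))
  growth : ∃ C, ∀ t ∈ Icc 0 T, ∀ x : Euc d, |v t x| ≤ C * (1 + ‖x‖)
  subsol : SubsolHJB T A b σ f v
  supersol : SupersolHJB T A b σ f v
  terminal : ∀ x : Euc d, v T x = g x

/-- (HC): comparison principle for the HJB equation between l.s.c. viscosity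
supersolutions and u.s.c. viscosity subsolutions with linear growth. -/
def CompPrinciple (T : ℝ) (A : Set (Euc q)) (b : Euc d → Euc q → Euc d)
    (σ : Euc d → Euc q → (Euc d →L[ℝ] Euc d))
    (f : Euc d → Euc q → ℝ → Euc d → ℝ) (g : Euc d → ℝ) : Prop :=
  ∀ w₁ w₂ : ℝ → Euc d → ℝ,
    LowerSemicontinuousOn (fun p : ℝ × Euc d => w₁ p.1 p.2) (Icc 0 T ×ˢ (univ : Set (Euc d))) →
    UpperSemicontinuousOn (fun p : ℝ × Euc d => w₂ p.1 p.2) (Icc 0 T ×ˢ (univ : Set (Euc d))) →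
    (∃ C, ∀ t ∈ Icc 0 T, ∀ x : Euc d, |w₁ t x| ≤ C * (1 + ‖x‖)) →
    (∃ C, ∀ t ∈ Icc 0 T, ∀ x : Euc d, |w₂ t x| ≤ C * (1 + ‖x‖)) →
    SupersolHJB T A b σ f w₁ → SubsolHJB T A b σ f w₂ →
    (∀ x : Euc d, g x ≤ w₁ T x) → (∀ x : Euc d, w₂ T x ≤ g x) →
    ∀ t ∈ Icc 0 T, ∀ x : Euc d, w₂ t x ≤ w₁ t x


/-- Counting part `Σ_{m ≥ 1, T_m ≤ t} h(ι_m)` of the Poisson random measure integral. -/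
def NhAux {Ω : Type} (Tn : ℕ → Ω → ℝ) (ιn : ℕ → Ω → Euc q) (h : Euc q → ℝ)
    (t : ℝ) (ω : Ω) : ℝ :=
  ∑' m : ℕ, if 0 < m ∧ Tn m ω ≤ t then h (ιn m ω) else 0

/-- Generator of the triple `(X, W, I)`: this encodes that `W` is a Brownian motion,
`I` a pure-jump process with intensity `λ`, and `dX = b(X,I)dt + σ(X,I)dW`. -/
def jointGen (b : Euc d → Euc q → Euc d) (σ : Euc d → Euc q → (Euc d →L[ℝ] Euc d))
    (lam : Measure (Euc q)) (φ : Euc d × Euc d × Euc q → ℝ)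
    (x w : Euc d) (a : Euc q) : ℝ :=
  fderiv ℝ (fun p : Euc d × Euc d => φ (p.1, p.2, a)) (x, w) (b x a, 0)
  + (1 / 2) * ∑ i : Fin d,
      D2 (fun p : Euc d × Euc d => φ (p.1, p.2, a)) (x, w)
        (σ x a (EuclideanSpace.single i 1), EuclideanSpace.single i 1)
        (σ x a (EuclideanSpace.single i 1), EuclideanSpace.single i 1)
  + ∫ a', (φ (x, w, a') - φ (x, w, a)) ∂lam

/-- The probabilistic setting of the paper: a filtered probability space carrying a
`d`-dimensional Brownian motion `W`, a Poisson random measure `μ = Σ δ_(T_m, ι_m)`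
on `ℝ₊ × A` with finite intensity `λ(da)dt`, the regime-switching pair `(X,I)`
solving (2.1) (encoded through the martingale problem for `(X,W,I)`), under (H1). -/
structure Setting (d q : ℕ) where
  T : ℝ
  hT : 0 < T
  A : Set (Euc q)
  hAcpt : IsCompact A
  hAne : A.Nonempty
  lam : Measure (Euc q)
  lamFin : IsFiniteMeasure lam
  lamA : lam Aᶜ = 0
  b : Euc d → Euc q → Euc d
  σ : Euc d → Euc q → (Euc d →L[ℝ] Euc d)
  L₁ : ℝ
  h1 : H1 A b σ L₁
  Ω : Type
  mΩ : MeasurableSpace Ω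
  P : @Measure Ω mΩ
  prob : IsProbabilityMeasure P
  F : Filtration ℝ mΩ
  W : ℝ → Ω → Euc d
  X : ℝ → Ω → Euc d
  I : ℝ → Ω → Euc q
  X0 : Euc d
  I0 : Euc q
  hI0 : I0 ∈ A
  hX0 : ∀ ω, X 0 ω = X0
  hW0 : ∀ ω, W 0 ω = 0
  hIA : ∀ t ω, I t ω ∈ A
  adW : Adapted F W
  adX : Adapted F X
  adI : Adapted F I
  contX : ∀ ω, Continuous fun t => X t ω
  contW : ∀ ω, Continuous fun t => W t ω
  Tn : ℕ → Ω → ℝ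
  ιn : ℕ → Ω → Euc q
  hTn0 : ∀ ω, Tn 0 ω = 0
  hιn0 : ∀ ω, ιn 0 ω = I0
  hTnmono : ∀ ω, StrictMono fun m => Tn m ω
  hTnlim : ∀ ω, Tendsto (fun m => Tn m ω) atTop atTop
  hιnA : ∀ m ω, ιn m ω ∈ A
  hIform : ∀ ω, ∀ m : ℕ, ∀ t, Tn m ω ≤ t → t < Tn (m + 1) ω → I t ω = ιn m ω
  mart : ∀ φ : Euc d × Euc d × Euc q → ℝ, ContDiff ℝ (⊤ : ℕ∞) φ → HasCompactSupport φ →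
    Martingale (fun t ω => φ (X t ω, W t ω, I t ω)
      - ∫ s in Ioc (0 : ℝ) t, jointGen b σ lam φ (X s ω) (W s ω) (I s ω)) F P
  pois : ∀ h : Euc q → ℝ, Measurable h → (∃ Ch, ∀ a, |h a| ≤ Ch) →
    Martingale (fun t ω => NhAux Tn ιn h t ω - t * ∫ a, h a ∂lam) F P

instance (S : Setting d q) : MeasurableSpace S.Ω := S.mΩ

/-- The Euler scheme `X̄^π` of the forward process, on the (ℕ-indexed) grid times. -/
def euler (S : Setting d q) {n : ℕ} (π : Grid S.T n) : ℕ → S.Ω → Euc d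
  | 0 => fun _ => S.X0
  | k + 1 => fun ω =>
      euler S π k ω + (π.tc (k + 1) - π.tc k) • S.b (euler S π k ω) (S.I (π.tc k) ω)
        + S.σ (euler S π k ω) (S.I (π.tc k) ω) (S.W (π.tc (k + 1)) ω - S.W (π.tc k) ω)

/-- Compensated Poisson functional `N^h_t = ∫_{(0,t]}∫_A h(a) μ̃(ds,da)`. -/
def NhBar (S : Setting d q) (h : Euc q → ℝ) (t : ℝ) (ω : S.Ω) : ℝ :=
  NhAux S.Tn S.ιn h t ω - t * ∫ a, h a ∂S.lam

/-- An implementation of the nested conditional expectations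
`E[ ess sup_a E_{t_1,a}[ … ess sup_a E_{t_k,a}[ξ] … ] ]`:
`h j a` is a version of `E[v (j+1) | F_{t_j}, I_{t_j} = a]` and
`v j = ess sup_{a ∈ A} h j a`, with `v (k+1) = ξ`. -/
structure ChainImpl (S : Setting d q) {n : ℕ} (π : Grid S.T n) (k : ℕ)
    (ξ : S.Ω → ℝ) where
  h : ℕ → Euc q → S.Ω → ℝ
  v : ℕ → S.Ω → ℝ
  htop : v (k + 1) = ξ
  hmeas : ∀ j, 1 ≤ j → j ≤ k → ∀ a : Euc q, StronglyMeasurable[S.F (π.tc j)] (h j a)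
  hdiag : ∀ j, 1 ≤ j → j ≤ k →
    (fun ω => h j (S.I (π.tc j) ω) ω) =ᵐ[S.P] S.P[v (j + 1)|S.F (π.tc j)]
  hsup : ∀ j, 1 ≤ j → j ≤ k → ∀ ω, v j ω = ⨆ a : S.A, h j (↑a) ω


/-- The product measure `dt ⊗ dP ⊗ λ(da)` on `[0,T] × Ω × A`. -/
def prodMeas (S : Setting d q) : Measure ((ℝ × S.Ω) × Euc q) :=
  ((volume.restrict (Icc (0 : ℝ) S.T)).prod S.P).prod S.lam

/-- The compensated process `M_t = 𝒴_t + ∫_s^t f(X_r, I_r, 𝒴_r, 𝒵_r) dr`. -/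
def MkProc (S : Setting d q) (f : Euc d → Euc q → ℝ → Euc d → ℝ)
    (Y : ℝ → S.Ω → ℝ) (Z : ℝ → S.Ω → Euc d) (s t : ℝ) (ω : S.Ω) : ℝ :=
  Y t ω + ∫ r in Ioc s t, f (S.X r ω) (S.I r ω) (Y r ω) (Z r ω)

/-- `(Y^π, 𝒴^π, 𝒵^π, 𝒰^π)` is a solution of the discretely jump-constrained BSDE
(3.5)-(3.6)-(3.7) on the grid `π`: the dynamics on each `[t_k, t_{k+1})` are expressed
through conditional expectations, `𝒵^π` (resp. `𝒰^π`) is identified through the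
bracket with `W` (resp. with the compensated Poisson functionals), and at grid times
`Y^π_{t_k} = ess sup_{a ∈ A} E[𝒴^π_{t_k} | X_{t_k}, I_{t_k} = a]`. -/
structure IsDiscBSDE (S : Setting d q) (f : Euc d → Euc q → ℝ → Euc d → ℝ)
    (g : Euc d → ℝ) {n : ℕ} (π : Grid S.T n)
    (Y 𝒴 : ℝ → S.Ω → ℝ) (Z : ℝ → S.Ω → Euc d) (U : ℝ → Euc q → S.Ω → ℝ) : Prop where
  adY : Adapted S.F Y
  adYY : Adapted S.F 𝒴
  adZ : Adapted S.F Z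
  adU : ∀ a : Euc q, Adapted S.F fun t ω => U t a ω
  sq : ∀ t ∈ Icc (0 : ℝ) S.T, MemLp (Y t) 2 S.P ∧ MemLp (𝒴 t) 2 S.P
  sqZ : (∫⁻ ω, ∫⁻ t in Icc (0 : ℝ) S.T, (‖Z t ω‖₊ : ℝ≥0∞) ^ 2 ∂volume ∂S.P) < ⊤
  sqU : (∫⁻ ω, ∫⁻ t in Icc (0 : ℝ) S.T, ∫⁻ a, (‖U t a ω‖₊ : ℝ≥0∞) ^ 2 ∂S.lam ∂volume ∂S.P) < ⊤
  terminalY : Y S.T =ᵐ[S.P] fun ω => g (S.X S.T ω)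
  terminalYY : 𝒴 S.T =ᵐ[S.P] fun ω => g (S.X S.T ω)
  inner : ∀ k : Fin n, ∀ t ∈ Ioo (π.t k.castSucc) (π.t k.succ), Y t =ᵐ[S.P] 𝒴 t
  dyn : ∀ k : Fin n, ∀ t ∈ Ico (π.t k.castSucc) (π.t k.succ),
    𝒴 t =ᵐ[S.P]
      S.P[(fun ω => Y (π.t k.succ) ω
        + ∫ r in Ioc t (π.t k.succ), f (S.X r ω) (S.I r ω) (𝒴 r ω) (Z r ω)) | S.F t]
  zchar : ∀ k : Fin n, ∀ i : Fin d, ∀ s t : ℝ,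
    π.t k.castSucc ≤ s → s ≤ t → t ≤ π.t k.succ →
    S.P[(fun ω => MkProc S f 𝒴 Z (π.t k.castSucc) t ω
          * EuclideanSpace.equiv (Fin d) ℝ (S.W t ω) i
        - ∫ r in Ioc s t, EuclideanSpace.equiv (Fin d) ℝ (Z r ω) i) | S.F s]
      =ᵐ[S.P] fun ω => MkProc S f 𝒴 Z (π.t k.castSucc) s ω
          * EuclideanSpace.equiv (Fin d) ℝ (S.W s ω) i
  uchar : ∀ k : Fin n, ∀ h : Euc q → ℝ, Measurable h → (∃ Ch, ∀ a, |h a| ≤ Ch) →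
    ∀ s t : ℝ, π.t k.castSucc ≤ s → s ≤ t → t ≤ π.t k.succ →
    S.P[(fun ω => MkProc S f 𝒴 Z (π.t k.castSucc) t ω * NhBar S h t ω
        - ∫ r in Ioc s t, ∫ a, U r a ω * h a ∂S.lam) | S.F s]
      =ᵐ[S.P] fun ω => MkProc S f 𝒴 Z (π.t k.castSucc) s ω * NhBar S h s ω
  step : ∀ k : Fin n, ∃ e : Euc d → Euc q → ℝ,
    Measurable (fun p : Euc d × Euc q => e p.1 p.2) ∧
    ((fun ω => e (S.X (π.t k.castSucc) ω) (S.I (π.t k.castSucc) ω)) =ᵐ[S.P]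
      S.P[𝒴 (π.t k.castSucc) |
        MeasurableSpace.comap
          (fun ω => (S.X (π.t k.castSucc) ω, S.I (π.t k.castSucc) ω)) inferInstance]) ∧
    (Y (π.t k.castSucc) =ᵐ[S.P] fun ω => ⨆ a : S.A, e (S.X (π.t k.castSucc) ω) ↑a)

/-- The process `N_t = Y_t + ∫_0^t f(X_r, I_r, Y_r, Z_r) dr + K_t`. -/
def NProc (S : Setting d q) (f : Euc d → Euc q → ℝ → Euc d → ℝ)
    (Y : ℝ → S.Ω → ℝ) (Z : ℝ → S.Ω → Euc d) (K : ℝ → S.Ω → ℝ) (t : ℝ) (ω : S.Ω) : ℝ :=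
  Y t ω + (∫ r in Ioc (0 : ℝ) t, f (S.X r ω) (S.I r ω) (Y r ω) (Z r ω)) + K t ω

/-- `(Y, Z, U, K)` is a solution of the BSDE with nonpositive jumps (3.1). -/
structure IsConsBSDE (S : Setting d q) (f : Euc d → Euc q → ℝ → Euc d → ℝ)
    (g : Euc d → ℝ) (Y : ℝ → S.Ω → ℝ) (Z : ℝ → S.Ω → Euc d)
    (U : ℝ → Euc q → S.Ω → ℝ) (K : ℝ → S.Ω → ℝ) : Prop where
  adY : Adapted S.F Y
  adZ : Adapted S.F Z
  adU : ∀ a : Euc q, Adapted S.F fun t ω => U t a ω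
  adK : Adapted S.F K
  sqY : ∀ t ∈ Icc (0 : ℝ) S.T, MemLp (Y t) 2 S.P
  sqK : MemLp (K S.T) 2 S.P
  sqZ : (∫⁻ ω, ∫⁻ t in Icc (0 : ℝ) S.T, (‖Z t ω‖₊ : ℝ≥0∞) ^ 2 ∂volume ∂S.P) < ⊤
  sqU : (∫⁻ ω, ∫⁻ t in Icc (0 : ℝ) S.T, ∫⁻ a, (‖U t a ω‖₊ : ℝ≥0∞) ^ 2 ∂S.lam ∂volume ∂S.P) < ⊤
  K0 : ∀ᵐ ω ∂S.P, K 0 ω = 0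
  Kmono : ∀ᵐ ω ∂S.P, MonotoneOn (fun t => K t ω) (Icc (0 : ℝ) S.T)
  terminal : Y S.T =ᵐ[S.P] fun ω => g (S.X S.T ω)
  mart : ∀ s t : ℝ, 0 ≤ s → s ≤ t → t ≤ S.T →
    S.P[(fun ω => NProc S f Y Z K t ω) | S.F s] =ᵐ[S.P] fun ω => NProc S f Y Z K s ω
  zchar : ∀ i : Fin d, ∀ s t : ℝ, 0 ≤ s → s ≤ t → t ≤ S.T →
    S.P[(fun ω => NProc S f Y Z K t ω * EuclideanSpace.equiv (Fin d) ℝ (S.W t ω) i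
        - ∫ r in Ioc s t, EuclideanSpace.equiv (Fin d) ℝ (Z r ω) i) | S.F s]
      =ᵐ[S.P] fun ω => NProc S f Y Z K s ω * EuclideanSpace.equiv (Fin d) ℝ (S.W s ω) i
  uchar : ∀ h : Euc q → ℝ, Measurable h → (∃ Ch, ∀ a, |h a| ≤ Ch) →
    ∀ s t : ℝ, 0 ≤ s → s ≤ t → t ≤ S.T →
    S.P[(fun ω => NProc S f Y Z K t ω * NhBar S h t ω
        - ∫ r in Ioc s t, ∫ a, U r a ω * h a ∂S.lam) | S.F s]
      =ᵐ[S.P] fun ω => NProc S f Y Z K s ω * NhBar S h s ω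
  constraint : ∀ᵐ p ∂(prodMeas S), U p.1.1 p.2 p.1.2 ≤ 0

/-- `(Y, Z, U, K)` is the minimal solution of the BSDE with nonpositive jumps. -/
def MinimalSol (S : Setting d q) (f : Euc d → Euc q → ℝ → Euc d → ℝ) (g : Euc d → ℝ)
    (Y : ℝ → S.Ω → ℝ) (Z : ℝ → S.Ω → Euc d)
    (U : ℝ → Euc q → S.Ω → ℝ) (K : ℝ → S.Ω → ℝ) : Prop :=
  IsConsBSDE S f g Y Z U K ∧
    ∀ Y' Z' U' K', IsConsBSDE S f g Y' Z' U' K' →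
      ∀ t ∈ Icc (0 : ℝ) S.T, ∀ᵐ ω ∂S.P, Y t ω ≤ Y' t ω


/-- The centered Gaussian measure on `ℝ^d` with covariance `v · Id` (the law of a
Brownian increment over a time step of length `v`). -/
def gaussE (d : ℕ) (v : ℝ) : Measure (Euc d) :=
  (Measure.pi fun _ : Fin d => gaussianReal 0 (Real.toNNReal v)).map
    ⇑(MeasurableEquiv.toLp 2 (Fin d → ℝ))

/-- The controlled Dynkin operator `L^a φ(x) = b(x,a)·Dφ + ½tr(σσᵀ(x,a)D²φ)` for
space-only test functions. -/
def spaceGen (b : Euc d → Euc q → Euc d) (σ : Euc d → Euc q → (Euc d →L[ℝ] Euc d))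
    (φ : Euc d → ℝ) (x : Euc d) (a : Euc q) : ℝ :=
  fderiv ℝ φ x (b x a)
    + (1 / 2) * ∑ i : Fin d,
        D2 φ x (σ x a (EuclideanSpace.single i 1)) (σ x a (EuclideanSpace.single i 1))

/-- An admissible control `α` together with the corresponding controlled diffusion
`X^α` (characterized through the martingale problem). -/
structure AdmPair (S : Setting d q) (α : ℝ → S.Ω → Euc q) (Xc : ℝ → S.Ω → Euc d) : Prop where
  hval : ∀ t ω, α t ω ∈ S.A
  adα : Adapted S.F α
  adXc : Adapted S.F Xc
  x0 : ∀ ω, Xc 0 ω = S.X0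
  contXc : ∀ ω, Continuous fun t => Xc t ω
  mp : ∀ φ : Euc d → ℝ, ContDiff ℝ (⊤ : ℕ∞) φ → HasCompactSupport φ →
    Martingale (fun t ω => φ (Xc t ω)
      - ∫ s in Ioc (0 : ℝ) t, spaceGen S.b S.σ φ (Xc s ω) (α s ω)) S.F S.P

/-- The gain functional `J(α) = E[∫_0^T f(X^α_t, α_t) dt + g(X^α_T)]`. -/
def Jfun (S : Setting d q) (f : Euc d → Euc q → ℝ) (g : Euc d → ℝ)
    (α : ℝ → S.Ω → Euc q) (Xc : ℝ → S.Ω → Euc d) : ℝ :=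
  ∫ ω, ((∫ t in Ioc (0 : ℝ) S.T, f (Xc t ω) (α t ω)) + g (Xc S.T ω)) ∂S.P

/-- The value `V₀ = sup_α J(α)` of the stochastic control problem. -/
def V0 (S : Setting d q) (f : Euc d → Euc q → ℝ) (g : Euc d → ℝ) : ℝ :=
  sSup {j | ∃ α Xc, AdmPair S α Xc ∧ j = Jfun S f g α Xc}

/-- The Euler scheme controlled by the feedback maps `â_k`. -/
def eulerCtrl (S : Setting d q) {n : ℕ} (π : Grid S.T n)
    (ahat : ℕ → Euc d → Euc q) : ℕ → S.Ω → Euc d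
  | 0 => fun _ => S.X0
  | k + 1 => fun ω =>
      let x := eulerCtrl S π ahat k ω
      x + (π.tc (k + 1) - π.tc k) • S.b x (ahat k x)
        + S.σ x (ahat k x) (S.W (π.tc (k + 1)) ω - S.W (π.tc k) ω)

/-- Bounds (4.9) and (4.11) of the smooth approximating family `(w_ε)`:
`sup |φ| ≤ C'` and `sup |∂_t^{β₀} D^β φ| ≤ C' ε^{1-2β₀-|β|}`. -/
def DerivBounds (C' ε : ℝ) (φ : ℝ → Euc d → ℝ) : Prop :=
  (∀ (t : ℝ) (x : Euc d), |φ t x| ≤ C') ∧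
  ∀ (β₀ k : ℕ) (t : ℝ) (x : Euc d),
    ‖iteratedFDeriv ℝ k (fun y => iteratedDeriv β₀ (fun s => φ s y) t) x‖
      ≤ C' * ε ^ (1 - 2 * (β₀ : ℤ) - (k : ℤ))

section Helpers
open Metric
open scoped RealInnerProductSpace

/- ===== helper layer (tested) ===== -/
def nrm (x : Euc d) : ℝ := Real.sqrt (1 + ‖x‖^2)
lemma sq_pos (x : Euc d) : (0:ℝ) < 1 + ‖x‖^2 := by positivity
lemma nrm_pos (x : Euc d) : 0 < nrm x := Real.sqrt_pos.2 (sq_pos x)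
lemma sq_nrm (x : Euc d) : nrm x ^ 2 = 1 + ‖x‖^2 := Real.sq_sqrt (le_of_lt (sq_pos x))
lemma one_le_nrm (x : Euc d) : 1 ≤ nrm x := by
  rw [show (1:ℝ) = Real.sqrt 1 by simp]
  exact Real.sqrt_le_sqrt (by nlinarith [sq_nonneg ‖x‖])
lemma norm_le_nrm (x : Euc d) : ‖x‖ ≤ nrm x := by
  rw [show ‖x‖ = Real.sqrt (‖x‖^2) by simp [Real.sqrt_sq (norm_nonneg x)]]
  exact Real.sqrt_le_sqrt (by linarith)
lemma nrm_le (x : Euc d) : nrm x ≤ 1 + ‖x‖ := by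
  rw [show (1:ℝ) + ‖x‖ = Real.sqrt ((1+‖x‖)^2) by rw [Real.sqrt_sq (by positivity)]]
  exact Real.sqrt_le_sqrt (by nlinarith [norm_nonneg x])
lemma contDiff_nrm : ContDiff ℝ (⊤ : ℕ∞) (nrm : Euc d → ℝ) := by
  rw [contDiff_iff_contDiffAt]
  intro x
  exact ContDiffAt.sqrt ((contDiff_const.add (contDiff_norm_sq ℝ)).contDiffAt)
    (ne_of_gt (sq_pos x))
lemma continuous_nrm : Continuous (nrm : Euc d → ℝ) := contDiff_nrm.continuous

def cns (κ β : ℝ) (x : Euc d) : ℝ := κ * (nrm x)⁻¹ + 2*β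

def bar (ρ r κ β M : ℝ) (t : ℝ) (x : Euc d) : ℝ :=
  Real.exp (ρ*(r-t)) * (κ * nrm x + β*(1+‖x‖^2) + M)

lemma bar_contDiff (ρ r κ β M : ℝ) :
    ContDiff ℝ (⊤ : ℕ∞) (fun p : ℝ × Euc d => bar ρ r κ β M p.1 p.2) := by
  unfold bar
  apply ContDiff.mul
  · exact Real.contDiff_exp.comp (contDiff_const.mul (contDiff_const.sub contDiff_fst))
  · exact (((contDiff_const.mul (contDiff_nrm.comp contDiff_snd)).add
      (contDiff_const.mul ((contDiff_const.add (contDiff_norm_sq ℝ)).comp contDiff_snd))).add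
      contDiff_const)

lemma hasFDerivAt_sqnorm (x : Euc d) :
    HasFDerivAt (fun y : Euc d => 1 + ‖y‖^2) ((2:ℝ) • innerSL ℝ x) x := by
  have h : HasFDerivAt (fun y : Euc d => ‖y‖^2) (2 • innerSL ℝ x) x :=
    (hasStrictFDerivAt_norm_sq x).hasFDerivAt
  have h2 := (hasFDerivAt_const (1:ℝ) x).add h
  have heq : ((0:Euc d →L[ℝ] ℝ) + 2 • innerSL ℝ x) = (2:ℝ) • innerSL ℝ x := by
    ext y; simp
  rw [heq] at h2
  exact h2

lemma hasFDerivAt_nrm (x : Euc d) :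
    HasFDerivAt (nrm : Euc d → ℝ) ((nrm x)⁻¹ • innerSL ℝ x) x := by
  have h := (hasFDerivAt_sqnorm x).sqrt (ne_of_gt (sq_pos x))
  have heq : (1 / (2 * Real.sqrt (1 + ‖x‖^2))) • ((2:ℝ) • innerSL ℝ x)
      = (nrm x)⁻¹ • innerSL ℝ x := by
    ext y
    have hn : Real.sqrt (1 + ‖x‖^2) = nrm x := rfl
    have := (nrm_pos x).ne'
    simp only [ContinuousLinearMap.smul_apply, smul_eq_mul, hn]
    field_simp
  rw [heq] at h
  exact h

lemma hasFDerivAt_inner_left (v x : Euc d) :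
    HasFDerivAt (fun y : Euc d => ⟪y, v⟫) (innerSL ℝ v) x := by
  have : (fun y : Euc d => ⟪y, v⟫) = fun y => (innerSL ℝ v) y := by
    funext y
    simp only [innerSL_apply_apply]
    exact real_inner_comm v y
  rw [this]
  exact (innerSL ℝ v).hasFDerivAt

lemma hasFDerivAt_bar_space (ρ r κ β M t : ℝ) (x : Euc d) :
    HasFDerivAt (bar ρ r κ β M t)
      ((Real.exp (ρ*(r-t)) * cns κ β x) • innerSL ℝ x) x := by
  have h0 := (((hasFDerivAt_nrm x).const_mul κ).add
      ((hasFDerivAt_sqnorm x).const_mul β)).add_const M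
  have h := h0.const_mul (Real.exp (ρ*(r-t)))
  have heq : Real.exp (ρ*(r-t)) • (κ • (nrm x)⁻¹ • innerSL ℝ x + β • (2:ℝ) • innerSL ℝ x)
      = (Real.exp (ρ*(r-t)) * cns κ β x) • innerSL ℝ x := by
    ext y
    have := (nrm_pos x).ne'
    simp only [ContinuousLinearMap.smul_apply, ContinuousLinearMap.add_apply,
      smul_eq_mul, cns]
    field_simp
  rw [heq] at h
  exact h

lemma fderiv_bar_apply (ρ r κ β M t : ℝ) (x v : Euc d) :
    fderiv ℝ (bar ρ r κ β M t) x v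
      = Real.exp (ρ*(r-t)) * (cns κ β x * ⟪x, v⟫) := by
  rw [(hasFDerivAt_bar_space ρ r κ β M t x).fderiv]
  simp only [ContinuousLinearMap.smul_apply, smul_eq_mul, innerSL_apply_apply]
  ring

lemma hasDerivAt_bar_time (ρ r κ β M : ℝ) (x : Euc d) (t : ℝ) :
    HasDerivAt (fun s => bar ρ r κ β M s x) (-ρ * bar ρ r κ β M t x) t := by
  have h1 : HasDerivAt (fun s : ℝ => ρ*(r-s)) (-ρ) t := by
    simpa using (((hasDerivAt_id t).const_sub r).const_mul ρ)
  have h2 := (h1.exp).mul_const (κ * nrm x + β*(1+‖x‖^2) + M)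
  refine h2.congr_deriv ?_
  unfold bar; ring

lemma deriv_bar_time (ρ r κ β M : ℝ) (x : Euc d) (t : ℝ) :
    deriv (fun s => bar ρ r κ β M s x) t = -ρ * bar ρ r κ β M t x :=
  (hasDerivAt_bar_time ρ r κ β M x t).deriv

lemma hasFDerivAt_cns (κ β : ℝ) (x : Euc d) :
    HasFDerivAt (cns (d := d) κ β)
      ((-(κ * ((nrm x)^3)⁻¹)) • innerSL ℝ x) x := by
  have hinv : HasFDerivAt (fun y : Euc d => (nrm y)⁻¹)
      ((-((nrm x)^2)⁻¹) • ((nrm x)⁻¹ • innerSL ℝ x)) x :=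
    (hasDerivAt_inv (ne_of_gt (nrm_pos x))).comp_hasFDerivAt x (hasFDerivAt_nrm x)
  have h := (hinv.const_mul κ).add_const (2*β)
  have heq : κ • ((-((nrm x)^2)⁻¹) • ((nrm x)⁻¹ • innerSL ℝ x))
      = (-(κ * ((nrm x)^3)⁻¹)) • innerSL ℝ x := by
    ext y
    have := (nrm_pos x).ne'
    simp only [ContinuousLinearMap.smul_apply, smul_eq_mul]
    field_simp
  rw [heq] at h
  exact h

lemma D2_bar (ρ r κ β M t : ℝ) (x u v : Euc d) :
    D2 (bar ρ r κ β M t) x u v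
      = Real.exp (ρ*(r-t)) *
        (cns κ β x * ⟪v, u⟫ - κ * ((nrm x)^3)⁻¹ * ⟪x, v⟫ * ⟪x, u⟫) := by
  unfold D2
  have heq : (fun y => fderiv ℝ (bar ρ r κ β M t) y v)
      = fun y => Real.exp (ρ*(r-t)) * (cns κ β y * ⟪y, v⟫) := by
    funext y; exact fderiv_bar_apply ρ r κ β M t y v
  rw [heq]
  have hprod := (hasFDerivAt_cns κ β x).mul (hasFDerivAt_inner_left v x)
  have h : HasFDerivAt (fun y => Real.exp (ρ*(r-t)) * (cns κ β y * ⟪y, v⟫)) _ x :=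
    hprod.const_mul (Real.exp (ρ*(r-t)))
  rw [h.fderiv]
  simp only [ContinuousLinearMap.smul_apply, ContinuousLinearMap.add_apply,
    smul_eq_mul, innerSL_apply_apply]
  ring

lemma norm_euc_le (f : Fin d → ℝ) (Z : ℝ) (hZ : 0 ≤ Z) (h : ∀ i, |f i| ≤ Z) :
    ‖(EuclideanSpace.equiv (Fin d) ℝ).symm f‖ ≤ Real.sqrt d * Z := by
  have hcomp : ∀ i, ((EuclideanSpace.equiv (Fin d) ℝ).symm f) i = f i := fun i => rfl
  rw [EuclideanSpace.norm_eq]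
  have h1 : ∑ i : Fin d, ‖((EuclideanSpace.equiv (Fin d) ℝ).symm f) i‖^2 ≤ (d : ℝ) * Z^2 := by
    calc ∑ i : Fin d, ‖((EuclideanSpace.equiv (Fin d) ℝ).symm f) i‖^2
        ≤ ∑ _i : Fin d, Z^2 := by
          apply Finset.sum_le_sum
          intro i _
          rw [hcomp, Real.norm_eq_abs]
          exact pow_le_pow_left₀ (abs_nonneg _) (h i) 2
      _ = (d : ℝ) * Z^2 := by simp [Finset.sum_const]
  calc Real.sqrt (∑ i : Fin d, ‖((EuclideanSpace.equiv (Fin d) ℝ).symm f) i‖^2)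
      ≤ Real.sqrt ((d:ℝ) * Z^2) := Real.sqrt_le_sqrt h1
    _ = Real.sqrt d * Z := by
        rw [Real.sqrt_mul (Nat.cast_nonneg d), Real.sqrt_sq hZ]

lemma exists_max {A : Set (Euc q)} (hA : IsCompact A) {a₀ : Euc q} (ha₀ : a₀ ∈ A)
    {s r : ℝ} (hsr : s ≤ r) (G : ℝ → Euc d → Euc q → ℝ)
    (hcont : ContinuousOn (fun p : ℝ × Euc d × Euc q => G p.1 p.2.1 p.2.2)
      (Icc s r ×ˢ (univ : Set (Euc d)) ×ˢ A))
    {C β : ℝ} (hC : 0 ≤ C) (hβ : 0 < β)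
    (hbd : ∀ t ∈ Icc s r, ∀ x : Euc d, ∀ a ∈ A, G t x a ≤ C*(1+‖x‖) - β*(1+‖x‖^2)) :
    ∃ t₀ ∈ Icc s r, ∃ x₀ : Euc d, ∃ a₂ ∈ A,
      ∀ t ∈ Icc s r, ∀ x : Euc d, ∀ a ∈ A, G t x a ≤ G t₀ x₀ a₂ := by
  set g₀ := G s 0 a₀ with hg₀
  set Rad := max 1 ((2*C + |g₀| + 1)/β) with hRad
  have hRad0 : (0:ℝ) ≤ Rad := le_trans zero_le_one (le_max_left _ _)
  have key : ∀ t ∈ Icc s r, ∀ x : Euc d, Rad ≤ ‖x‖ → ∀ a ∈ A, G t x a < g₀ := by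
    intro t ht x hx a ha
    have hu1 : 1 ≤ ‖x‖ := le_trans (le_max_left _ _) hx
    have hu2 : (2*C + |g₀| + 1)/β ≤ ‖x‖ := le_trans (le_max_right _ _) hx
    have hu3 : 2*C + |g₀| + 1 ≤ β * ‖x‖ := by
      rw [div_le_iff₀ hβ] at hu2; linarith [hu2]
    have h1 := hbd t ht x a ha
    have h4 : β * ‖x‖ * ‖x‖ ≥ (2*C + |g₀| + 1) * ‖x‖ :=
      mul_le_mul_of_nonneg_right hu3 (by linarith)
    have h5 : (2*C + |g₀| + 1) * ‖x‖ ≥ 2*C*‖x‖ + |g₀| + 1 := by nlinarith [abs_nonneg g₀]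
    have h6 : -|g₀| ≤ g₀ := neg_abs_le g₀
    nlinarith [sq_nonneg ‖x‖, mul_le_mul_of_nonneg_right hu1 hC]
  set K : Set (ℝ × Euc d × Euc q) := Icc s r ×ˢ closedBall (0:Euc d) Rad ×ˢ A with hK
  have hKcomp : IsCompact K :=
    (isCompact_Icc).prod ((isCompact_closedBall 0 Rad).prod hA)
  have hp0 : ((s, (0:Euc d), a₀) : ℝ × Euc d × Euc q) ∈ K := by
    refine ⟨⟨le_refl s, hsr⟩, ?_, ha₀⟩
    simp [hRad0]
  have hKsub : K ⊆ Icc s r ×ˢ (univ : Set (Euc d)) ×ˢ A := by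
    rintro ⟨t, x, a⟩ ⟨h1, h2, h3⟩
    exact ⟨h1, trivial, h3⟩
  obtain ⟨p, hpK, hpmax⟩ := hKcomp.exists_isMaxOn ⟨_, hp0⟩ (hcont.mono hKsub)
  obtain ⟨t₀, x₀, a₂⟩ := p
  refine ⟨t₀, hpK.1, x₀, a₂, hpK.2.2, ?_⟩
  intro t ht x a ha
  rcases le_or_gt ‖x‖ Rad with hle | hgtb
  · exact hpmax (show ((t,x,a) : ℝ × Euc d × Euc q) ∈ K from ⟨ht, by simpa using hle, ha⟩)
  · have h1 : G t x a < g₀ := key t ht x hgtb.le a ha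
    have h2 : g₀ ≤ G t₀ x₀ a₂ := hpmax hp0
    linarith
lemma arith_f {F₀ L R sd B x eu fv z : ℝ} (hF₀ : 0 ≤ F₀) (hL : 1 ≤ L) (hR : 0 ≤ R)
    (hsd : 0 ≤ sd) (hB : 0 ≤ B) (heu1 : 1 ≤ eu) (hxn : x ≤ eu)
    (hz : z ≤ sd*(4*B*eu))
    (hfv : fv ≤ F₀ + L*(x + 2*R + eu + z)) :
    fv ≤ (F₀ + 2*L*R + 2*L + 4*sd*B*L) * eu := by
  have hL0 : (0:ℝ) ≤ L := by linarith
  have h1 : L*x ≤ L*eu := mul_le_mul_of_nonneg_left hxn hL0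
  have h2 : L*z ≤ L*(sd*(4*B*eu)) := mul_le_mul_of_nonneg_left hz hL0
  have h3 : 0 ≤ (L*R)*(eu-1) := mul_nonneg (mul_nonneg hL0 hR) (by linarith)
  have h4 : 0 ≤ F₀*(eu-1) := mul_nonneg hF₀ (by linarith)
  linarith only [hfv, h1, h2, h3, h4]

set_option maxHeartbeats 1000000 in
lemma keyUB {A : Set (Euc q)} (hA : IsCompact A) {a₀ : Euc q} (ha₀ : a₀ ∈ A)
    {lam : Measure (Euc q)} (hlamA : lam Aᶜ = 0)
    {b : Euc d → Euc q → Euc d} {σ : Euc d → Euc q → (Euc d →L[ℝ] Euc d)}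
    {f : Euc d → Euc q → ℝ → Euc d → ℝ} {B L F₀ R : ℝ}
    (hB : 0 ≤ B) (hL : 1 ≤ L) (hR : 0 ≤ R) (hF₀ : 0 ≤ F₀)
    (hb : ∀ x : Euc d, ∀ a ∈ A, ‖b x a‖ ≤ B*(1+‖x‖))
    (hσ : ∀ x : Euc d, ∀ a ∈ A, ‖σ x a‖ ≤ B*(1+‖x‖))
    (hf : ∀ x : Euc d, ∀ a ∈ A, ∀ y : ℝ, ∀ z : Euc d,
      |f x a y z| ≤ F₀ + L*(‖x‖ + 2*R + |y| + ‖z‖))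
    {ρ : ℝ}
    (hρ : 4*B + 4*(d:ℝ)*B^2 + F₀ + 2*L*R + 2*L + 4*Real.sqrt d*B*L + 1 ≤ ρ)
    {s r : ℝ} (hsr : s ≤ r) {w : ℝ → Euc d → Euc q → ℝ}
    (hcont : ContinuousOn (fun p : ℝ × Euc d × Euc q => w p.1 p.2.1 p.2.2)
      (Icc s r ×ˢ (univ : Set (Euc d)) ×ˢ A))
    (hgrow : ∃ C, ∀ t ∈ Icc s r, ∀ x : Euc d, ∀ a ∈ A, |w t x a| ≤ C * (1 + ‖x‖))
    (hsub : SubsolIPDE A lam b σ f s r w)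
    {κ : ℝ} (hκ : 1 ≤ κ)
    (hterm : ∀ x : Euc d, ∀ a ∈ A, w r x a ≤ κ * nrm x) :
    ∀ t ∈ Icc s r, ∀ x : Euc d, ∀ a ∈ A,
      w t x a ≤ Real.exp (ρ*(r-t)) * (κ * nrm x) := by
  obtain ⟨C₀, hC₀⟩ := hgrow
  set C := max C₀ 0 with hCdef
  have hC : 0 ≤ C := le_max_right _ _
  have hgrow' : ∀ t ∈ Icc s r, ∀ x : Euc d, ∀ a ∈ A, |w t x a| ≤ C * (1 + ‖x‖) := by
    intro t ht x a ha
    exact le_trans (hC₀ t ht x a ha)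
      (mul_le_mul_of_nonneg_right (le_max_left _ _) (by positivity))
  have hsqd : (0:ℝ) ≤ Real.sqrt d := Real.sqrt_nonneg _
  have hd0 : (0:ℝ) ≤ (d:ℝ) := Nat.cast_nonneg d
  have hρ0 : 0 ≤ ρ := by
    have hLR : 0 ≤ L*R := mul_nonneg (by linarith) hR
    have hdB : 0 ≤ (d:ℝ)*B^2 := mul_nonneg hd0 (sq_nonneg B)
    have hsBL : 0 ≤ Real.sqrt d*B*L := mul_nonneg (mul_nonneg hsqd hB) (by linarith)
    linarith
  have main : ∀ β : ℝ, 0 < β → ∀ t ∈ Icc s r, ∀ x : Euc d, ∀ a ∈ A,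
      w t x a ≤ Real.exp (ρ*(r-t)) * (κ * nrm x + β*(1+‖x‖^2)) := by
    intro β hβ
    by_contra hcon
    push_neg at hcon
    obtain ⟨t₁, ht₁, x₁, a₁, ha₁, hgt⟩ := hcon
    set G : ℝ → Euc d → Euc q → ℝ := fun t x a =>
      Real.exp (ρ*(t-r)) * w t x a - κ * nrm x - β*(1+‖x‖^2) with hGdef
    have hGbd : ∀ t ∈ Icc s r, ∀ x : Euc d, ∀ a ∈ A,
        G t x a ≤ C*(1+‖x‖) - β*(1+‖x‖^2) := by
      intro t ht x a ha
      have he1 : Real.exp (ρ*(t-r)) ≤ 1 := by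
        rw [Real.exp_le_one_iff]
        have h0 : t - r ≤ 0 := by linarith [ht.2]
        exact mul_nonpos_of_nonneg_of_nonpos hρ0 h0
      have he0 : (0:ℝ) < Real.exp (ρ*(t-r)) := Real.exp_pos _
      have h1 : Real.exp (ρ*(t-r)) * w t x a ≤ C*(1+‖x‖) := by
        calc Real.exp (ρ*(t-r)) * w t x a
            ≤ Real.exp (ρ*(t-r)) * |w t x a| :=
              mul_le_mul_of_nonneg_left (le_abs_self _) he0.le
          _ ≤ 1 * |w t x a| := mul_le_mul_of_nonneg_right he1 (abs_nonneg _)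
          _ = |w t x a| := one_mul _
          _ ≤ C*(1+‖x‖) := hgrow' t ht x a ha
      have h2 : 0 ≤ κ * nrm x := mul_nonneg (by linarith) (nrm_pos x).le
      simp only [hGdef]
      linarith
    have hGcont : ContinuousOn (fun p : ℝ × Euc d × Euc q => G p.1 p.2.1 p.2.2)
        (Icc s r ×ˢ (univ : Set (Euc d)) ×ˢ A) := by
      simp only [hGdef]
      apply ContinuousOn.sub
      apply ContinuousOn.sub
      · exact ContinuousOn.mul
          ((Real.continuous_exp.comp ((continuous_const.mul
            (continuous_fst.sub continuous_const)))).continuousOn) hcont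
      · exact (continuous_const.mul
          (continuous_nrm.comp (continuous_fst.comp continuous_snd))).continuousOn
      · exact (continuous_const.mul ((continuous_const.add
          ((continuous_norm.comp (continuous_fst.comp continuous_snd)).pow 2)))).continuousOn
    obtain ⟨t₀, ht₀, x₀, a₂, ha₂, hmax⟩ :=
      exists_max hA ha₀ hsr G hGcont hC hβ hGbd
    set M := G t₀ x₀ a₂ with hM
    have hexp_prod : ∀ t : ℝ, Real.exp (ρ*(r-t)) * Real.exp (ρ*(t-r)) = 1 := by
      intro t
      rw [← Real.exp_add, show ρ*(r-t) + ρ*(t-r) = 0 by ring, Real.exp_zero]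
    have hMpos : 0 < M := by
      have h1 : 0 < G t₁ x₁ a₁ := by
        have he0 : (0:ℝ) < Real.exp (ρ*(t₁-r)) := Real.exp_pos _
        have h2 : Real.exp (ρ*(t₁-r)) * (Real.exp (ρ*(r-t₁)) * (κ * nrm x₁ + β*(1+‖x₁‖^2)))
            < Real.exp (ρ*(t₁-r)) * w t₁ x₁ a₁ :=
          (mul_lt_mul_iff_right₀ he0).mpr hgt
        have h3 : Real.exp (ρ*(t₁-r)) * (Real.exp (ρ*(r-t₁)) * (κ * nrm x₁ + β*(1+‖x₁‖^2)))
            = κ * nrm x₁ + β*(1+‖x₁‖^2) := by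
          rw [← mul_assoc, mul_comm (Real.exp (ρ*(t₁-r))), hexp_prod t₁, one_mul]
        simp only [hGdef]
        rw [h3] at h2
        linarith
      exact lt_of_lt_of_le h1 (hmax t₁ ht₁ x₁ a₁ ha₁)
    have ht₀r : t₀ < r := by
      rcases lt_or_eq_of_le ht₀.2 with h | h
      · exact h
      · exfalso
        have h1 : M = w r x₀ a₂ - κ * nrm x₀ - β*(1+‖x₀‖^2) := by
          rw [hM, hGdef]
          simp only [h, sub_self, mul_zero, Real.exp_zero, one_mul]
        have h2 := hterm x₀ a₂ ha₂
        have h3 : 0 < β*(1+‖x₀‖^2) := by positivity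
        linarith
    -- value of w at the max point
    have hwstar : w t₀ x₀ a₂
        = Real.exp (ρ*(r-t₀)) * (κ * nrm x₀ + β*(1+‖x₀‖^2) + M) := by
      have h1 : Real.exp (ρ*(t₀-r)) * w t₀ x₀ a₂ - κ * nrm x₀ - β*(1+‖x₀‖^2) = M := by
        rw [hM, hGdef]
      have h2 := hexp_prod t₀
      linear_combination Real.exp (ρ*(r-t₀)) * h1 - (w t₀ x₀ a₂) * h2
    -- touching condition
    have htouch : ∀ t ∈ Ico s r, ∀ x : Euc d,
        w t x a₂ - bar ρ r κ β M t x ≤ w t₀ x₀ a₂ - bar ρ r κ β M t₀ x₀ := by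
      intro t ht x
      have hG : G t x a₂ ≤ M := hmax t ⟨ht.1, ht.2.le⟩ x a₂ ha₂
      have hrhs : w t₀ x₀ a₂ - bar ρ r κ β M t₀ x₀ = 0 := by
        rw [hwstar]; simp only [bar]; ring
      rw [hrhs]
      have he0 : (0:ℝ) < Real.exp (ρ*(r-t)) := Real.exp_pos _
      have h2 : w t x a₂ - bar ρ r κ β M t x = Real.exp (ρ*(r-t)) * (G t x a₂ - M) := by
        simp only [bar, hGdef]
        linear_combination (-(w t x a₂)) * (hexp_prod t)
      rw [h2]
      exact mul_nonpos_of_nonneg_of_nonpos he0.le (by linarith)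
    have hsub' := hsub a₂ ha₂ t₀ ⟨ht₀.1, ht₀r⟩ x₀ (bar ρ r κ β M)
      (bar_contDiff ρ r κ β M) htouch
    -- shorthands / basic facts
    have hn1 : 1 ≤ nrm x₀ := one_le_nrm x₀
    have hnx : ‖x₀‖ ≤ nrm x₀ := norm_le_nrm x₀
    have hn2 : (nrm x₀)^2 = 1+‖x₀‖^2 := sq_nrm x₀
    have hnpos : 0 < nrm x₀ := nrm_pos x₀
    have hsq0 : (0:ℝ) < 1+‖x₀‖^2 := sq_pos x₀
    set n := nrm x₀ with hn
    clear_value n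
    set e := Real.exp (ρ*(r-t₀)) with he
    clear_value e
    set u : ℝ := κ * n + β*(1+‖x₀‖^2) + M with hu
    clear_value u
    set c := cns κ β x₀ with hc
    clear_value c
    have hκ0 : (0:ℝ) ≤ κ := by linarith
    have he1 : 1 ≤ e := by
      rw [he]
      exact Real.one_le_exp (mul_nonneg hρ0 (by linarith [ht₀r.le]))
    have hepos : (0:ℝ) < e := lt_of_lt_of_le one_pos he1
    have hκn : (1:ℝ)*1 ≤ κ*n := mul_le_mul hκ hn1 zero_le_one hκ0
    have hβsq : (0:ℝ) < β*(1+‖x₀‖^2) := mul_pos hβ hsq0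
    have hu1 : (1:ℝ) ≤ u := by rw [hu]; linarith
    have hupos : (0:ℝ) < u := lt_of_lt_of_le one_pos hu1
    have heu1 : (1:ℝ) ≤ e * u := by
      have := mul_le_mul he1 hu1 zero_le_one (by linarith : (0:ℝ) ≤ e)
      linarith
    have heupos : (0:ℝ) < e * u := lt_of_lt_of_le one_pos heu1
    have hws : w t₀ x₀ a₂ = e * u := hwstar
    have hninv0 : (0:ℝ) ≤ (nrm x₀)⁻¹ := inv_nonneg.mpr (nrm_pos x₀).le
    have hc0 : 0 ≤ c := by
      rw [hc, cns]
      have := mul_nonneg hκ0 hninv0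
      linarith
    have hcn2 : c * n^2 = κ*n + 2*β*n^2 := by
      rw [hc, cns, hn]
      have := (nrm_pos x₀).ne'
      field_simp
    have h0n : (1:ℝ)+‖x₀‖^2 = n^2 := by rw [hn, sq_nrm]
    have hcnu : c * n^2 ≤ 2*u := by
      rw [hcn2, hu, h0n]
      linarith
    have hnu : n ≤ u := by
      have h1 : n ≤ κ*n := le_mul_of_one_le_left (by linarith) hκ
      rw [hu]
      linarith
    have hueu : u ≤ e*u := le_mul_of_one_le_left hupos.le he1
    have hbb : ‖b x₀ a₂‖ ≤ 2*B*n := by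
      have h1 := hb x₀ a₂ ha₂
      have h2 : B*(1+‖x₀‖) ≤ B*(2*n) := by
        apply mul_le_mul_of_nonneg_left _ hB
        linarith
      calc ‖b x₀ a₂‖ ≤ B*(1+‖x₀‖) := h1
        _ ≤ B*(2*n) := h2
        _ = 2*B*n := by ring
    have hvi : ∀ i : Fin d, ‖σ x₀ a₂ (EuclideanSpace.single i 1)‖ ≤ 2*B*n := by
      intro i
      have h1 : ‖σ x₀ a₂ (EuclideanSpace.single i 1)‖
          ≤ ‖σ x₀ a₂‖ * ‖EuclideanSpace.single i (1:ℝ)‖ :=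
        ContinuousLinearMap.le_opNorm _ _
      have h2 : ‖EuclideanSpace.single i (1:ℝ)‖ = 1 := by
        rw [EuclideanSpace.norm_single]; norm_num
      have h3 := hσ x₀ a₂ ha₂
      rw [h2, mul_one] at h1
      have h4 : B*(1+‖x₀‖) ≤ B*(2*n) := by
        apply mul_le_mul_of_nonneg_left _ hB
        linarith
      calc ‖σ x₀ a₂ (EuclideanSpace.single i 1)‖ ≤ B*(1+‖x₀‖) := le_trans h1 h3
        _ ≤ B*(2*n) := h4
        _ = 2*B*n := by ring
    have hB2 : (0:ℝ) ≤ 4*B^2 := by positivity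
    have h2B : (0:ℝ) ≤ 2*B := by linarith
    -- Lgen bound
    have hLgen : Lgen b σ a₂ (bar ρ r κ β M) t₀ x₀ ≤ (-ρ + 4*B + 4*(d:ℝ)*B^2) * (e*u) := by
      have hT1 : deriv (fun s' => bar ρ r κ β M s' x₀) t₀ = -ρ * (e*u) := by
        rw [deriv_bar_time]
        rw [he, hu, hn]
        simp only [bar]
        try ring
      have hT2 : fderiv ℝ (bar ρ r κ β M t₀) x₀ (b x₀ a₂) ≤ 4*B*(e*u) := by
        rw [fderiv_bar_apply, ← he, ← hc]
        have hip : ⟪x₀, b x₀ a₂⟫ ≤ n * (2*B*n) :=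
          le_trans (real_inner_le_norm _ _)
            (mul_le_mul hnx hbb (norm_nonneg _) (by linarith))
        have h1 : c * ⟪x₀, b x₀ a₂⟫ ≤ 4*B*u := by
          have h2 : c * ⟪x₀, b x₀ a₂⟫ ≤ c * (n*(2*B*n)) :=
            mul_le_mul_of_nonneg_left hip hc0
          have h3 : (2*B) * (c*n^2) ≤ (2*B) * (2*u) :=
            mul_le_mul_of_nonneg_left hcnu h2B
          linarith only [h2, h3]
        calc e * (c * ⟪x₀, b x₀ a₂⟫) ≤ e * (4*B*u) :=
              mul_le_mul_of_nonneg_left h1 hepos.le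
          _ = 4*B*(e*u) := by ring
      have hT3 : (1/2) * (∑ i : Fin d, D2 (bar ρ r κ β M t₀) x₀
            (σ x₀ a₂ (EuclideanSpace.single i 1)) (σ x₀ a₂ (EuclideanSpace.single i 1)))
          ≤ 4*(d:ℝ)*B^2*(e*u) := by
        have hterm2 : ∀ i : Fin d, D2 (bar ρ r κ β M t₀) x₀
            (σ x₀ a₂ (EuclideanSpace.single i 1)) (σ x₀ a₂ (EuclideanSpace.single i 1))
            ≤ 8*B^2*(e*u) := by
          intro i
          rw [D2_bar, ← he, ← hc, ← hn]
          set v := σ x₀ a₂ (EuclideanSpace.single i 1) with hv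
          have hvb := hvi i
          rw [← hv] at hvb
          have h1 : ⟪v, v⟫ = ‖v‖^2 := real_inner_self_eq_norm_sq v
          have h2 : c * ⟪v,v⟫ ≤ c * (4*B^2*n^2) := by
            rw [h1]
            apply mul_le_mul_of_nonneg_left _ hc0
            calc ‖v‖^2 ≤ (2*B*n)^2 := pow_le_pow_left₀ (norm_nonneg v) hvb 2
              _ = 4*B^2*n^2 := by ring
          have h3 : 0 ≤ κ * ((n)^3)⁻¹ * ⟪x₀, v⟫ * ⟪x₀, v⟫ := by
            have hrw : κ * ((n)^3)⁻¹ * ⟪x₀, v⟫ * ⟪x₀, v⟫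
                = (κ * ((n)^3)⁻¹) * (⟪x₀, v⟫ * ⟪x₀, v⟫) := by ring
            rw [hrw]
            apply mul_nonneg (mul_nonneg hκ0 _) (mul_self_nonneg _)
            rw [hn]
            exact inv_nonneg.mpr (pow_nonneg (nrm_pos x₀).le 3)
          have h35 : (4*B^2) * (c*n^2) ≤ (4*B^2) * (2*u) :=
            mul_le_mul_of_nonneg_left hcnu hB2
          have h4 : c * ⟪v,v⟫ - κ*((n)^3)⁻¹*⟪x₀,v⟫*⟪x₀,v⟫ ≤ 8*B^2*u := by
            linarith only [h2, h3, h35]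
          calc e * (c * ⟪v,v⟫ - κ*((n)^3)⁻¹*⟪x₀,v⟫*⟪x₀,v⟫) ≤ e * (8*B^2*u) :=
                mul_le_mul_of_nonneg_left h4 hepos.le
            _ = 8*B^2*(e*u) := by ring
        have hsum : (∑ i : Fin d, D2 (bar ρ r κ β M t₀) x₀
            (σ x₀ a₂ (EuclideanSpace.single i 1)) (σ x₀ a₂ (EuclideanSpace.single i 1)))
            ≤ (d:ℝ) * (8*B^2*(e*u)) := by
          calc (∑ i : Fin d, D2 (bar ρ r κ β M t₀) x₀
              (σ x₀ a₂ (EuclideanSpace.single i 1)) (σ x₀ a₂ (EuclideanSpace.single i 1)))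
              ≤ ∑ _i : Fin d, 8*B^2*(e*u) := Finset.sum_le_sum (fun i _ => hterm2 i)
            _ = (d:ℝ) * (8*B^2*(e*u)) := by simp [Finset.sum_const]
        calc ((1/2) * (∑ i : Fin d, D2 (bar ρ r κ β M t₀) x₀
            (σ x₀ a₂ (EuclideanSpace.single i 1)) (σ x₀ a₂ (EuclideanSpace.single i 1))))
            ≤ (1/2) * ((d:ℝ) * (8*B^2*(e*u))) := by
              apply mul_le_mul_of_nonneg_left hsum (by norm_num)
          _ = 4*(d:ℝ)*B^2*(e*u) := by ring
      have hLg : Lgen b σ a₂ (bar ρ r κ β M) t₀ x₀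
          = deriv (fun s' => bar ρ r κ β M s' x₀) t₀
            + fderiv ℝ (bar ρ r κ β M t₀) x₀ (b x₀ a₂)
            + (1/2) * (∑ i : Fin d, D2 (bar ρ r κ β M t₀) x₀
              (σ x₀ a₂ (EuclideanSpace.single i 1)) (σ x₀ a₂ (EuclideanSpace.single i 1))) := rfl
      rw [hLg, hT1]
      linarith
    -- gradient bound
    have hz : ‖sigmaTGrad σ a₂ (bar ρ r κ β M t₀) x₀‖ ≤ Real.sqrt d * (4*B*(e*u)) := by
      have hz0 : (0:ℝ) ≤ 4*B*(e*u) := mul_nonneg (by linarith) heupos.le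
      apply norm_euc_le _ _ hz0
      intro i
      rw [fderiv_bar_apply, ← he, ← hc]
      set v := σ x₀ a₂ (EuclideanSpace.single i 1) with hv
      have hvb := hvi i
      rw [← hv] at hvb
      have hip : |⟪x₀, v⟫| ≤ n*(2*B*n) :=
        le_trans (abs_real_inner_le_norm _ _)
          (mul_le_mul hnx hvb (norm_nonneg _) (by linarith))
      have h1 : |c * ⟪x₀,v⟫| ≤ 4*B*u := by
        rw [abs_mul, abs_of_nonneg hc0]
        have h2 : c * |⟪x₀,v⟫| ≤ c * (n*(2*B*n)) := mul_le_mul_of_nonneg_left hip hc0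
        have h3 : (2*B) * (c*n^2) ≤ (2*B) * (2*u) := mul_le_mul_of_nonneg_left hcnu h2B
        linarith only [h2, h3]
      calc |e * (c * ⟪x₀,v⟫)| = e * |c * ⟪x₀,v⟫| := by
            rw [abs_mul, abs_of_pos hepos]
        _ ≤ e * (4*B*u) := mul_le_mul_of_nonneg_left h1 hepos.le
        _ = 4*B*(e*u) := by ring
    -- f bound
    have hfb : f x₀ a₂ (w t₀ x₀ a₂) (sigmaTGrad σ a₂ (bar ρ r κ β M t₀) x₀)
        ≤ (F₀ + 2*L*R + 2*L + 4*Real.sqrt d*B*L) * (e*u) := by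
      have h1 := hf x₀ a₂ ha₂ (w t₀ x₀ a₂) (sigmaTGrad σ a₂ (bar ρ r κ β M t₀) x₀)
      have h2 : |w t₀ x₀ a₂| = e*u := by
        rw [hws]; exact abs_of_pos heupos
      rw [h2] at h1
      have h3 := le_trans (le_abs_self _) h1
      have h4 : ‖x₀‖ ≤ e*u := by linarith
      have h6 : (F₀ + 2*L*R + 2*L + 4*Real.sqrt d*B*L) * (e*u)
          = (F₀ + 2*L*R + 2*L + 4*(Real.sqrt d)*B*L) * (e*u) := by ring
      rw [h6]
      exact arith_f hF₀ hL hR hsqd hB heu1 h4 hz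
        (by linarith [h3, hnx, hnu, hueu] :
          f x₀ a₂ (w t₀ x₀ a₂) (sigmaTGrad σ a₂ (bar ρ r κ β M t₀) x₀)
            ≤ F₀ + L*(‖x₀‖ + 2*R + e*u + ‖sigmaTGrad σ a₂ (bar ρ r κ β M t₀) x₀‖))
    -- nonlocal term
    have hNL : NL lam w t₀ x₀ a₂ ≤ 0 := by
      have hsubset : {a' : Euc q | ¬ (w t₀ x₀ a' - w t₀ x₀ a₂ ≤ (0:ℝ))} ⊆ Aᶜ := by
        intro a' ha'
        simp only [mem_setOf_eq, not_le] at ha'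
        intro hmem
        have h1 : G t₀ x₀ a' ≤ M := hmax t₀ ht₀ x₀ a' hmem
        have h2 : Real.exp (ρ*(t₀-r)) * w t₀ x₀ a'
            ≤ Real.exp (ρ*(t₀-r)) * w t₀ x₀ a₂ := by
          have h3 : G t₀ x₀ a' - G t₀ x₀ a₂ ≤ 0 := by rw [← hM]; linarith
          simp only [hGdef] at h3
          linarith
        have he' : (0:ℝ) < Real.exp (ρ*(t₀-r)) := Real.exp_pos _
        have h4 := le_of_mul_le_mul_left h2 he'
        linarith
      have hae : ∀ᵐ a' ∂lam, w t₀ x₀ a' - w t₀ x₀ a₂ ≤ (0:ℝ) := by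
        rw [ae_iff]
        exact measure_mono_null hsubset hlamA
      have : NL lam w t₀ x₀ a₂ = ∫ a', (w t₀ x₀ a' - w t₀ x₀ a₂) ∂lam := rfl
      rw [this]
      exact integral_nonpos_of_ae hae
    -- final contradiction
    have hcoef : (-ρ + 4*B + 4*(d:ℝ)*B^2) + (F₀ + 2*L*R + 2*L + 4*Real.sqrt d*B*L) ≤ -1 := by
      linarith
    have hsum2 : Lgen b σ a₂ (bar ρ r κ β M) t₀ x₀
          + f x₀ a₂ (w t₀ x₀ a₂) (sigmaTGrad σ a₂ (bar ρ r κ β M t₀) x₀)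
          + NL lam w t₀ x₀ a₂
        ≤ ((-ρ + 4*B + 4*(d:ℝ)*B^2) + (F₀ + 2*L*R + 2*L + 4*Real.sqrt d*B*L)) * (e*u) := by
      have := add_le_add (add_le_add hLgen hfb) hNL
      calc Lgen b σ a₂ (bar ρ r κ β M) t₀ x₀
          + f x₀ a₂ (w t₀ x₀ a₂) (sigmaTGrad σ a₂ (bar ρ r κ β M t₀) x₀)
          + NL lam w t₀ x₀ a₂
          ≤ (-ρ + 4*B + 4*(d:ℝ)*B^2) * (e*u)
            + (F₀ + 2*L*R + 2*L + 4*Real.sqrt d*B*L) * (e*u) + 0 := this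
        _ = ((-ρ + 4*B + 4*(d:ℝ)*B^2) + (F₀ + 2*L*R + 2*L + 4*Real.sqrt d*B*L)) * (e*u) := by
            ring
    have hneg : ((-ρ + 4*B + 4*(d:ℝ)*B^2) + (F₀ + 2*L*R + 2*L + 4*Real.sqrt d*B*L)) * (e*u)
        ≤ -(e*u) := by
      have := mul_le_mul_of_nonneg_right hcoef heupos.le
      linarith
    linarith [hsub']
  -- conclude by letting β → 0
  intro t ht x a ha
  have hx : ∀ ε : ℝ, 0 < ε → w t x a ≤ Real.exp (ρ*(r-t)) * (κ * nrm x) + ε := by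
    intro ε hε
    have hden : (0:ℝ) < Real.exp (ρ*(r-t)) * (1+‖x‖^2) := by positivity
    set β := ε / (Real.exp (ρ*(r-t)) * (1+‖x‖^2)) with hβdef
    have hβ : 0 < β := div_pos hε hden
    have h1 := main β hβ t ht x a ha
    have h2 : Real.exp (ρ*(r-t)) * (β*(1+‖x‖^2)) = ε := by
      rw [hβdef]
      field_simp
    calc w t x a ≤ Real.exp (ρ*(r-t)) * (κ*nrm x + β*(1+‖x‖^2)) := h1
      _ = Real.exp (ρ*(r-t)) * (κ*nrm x) + Real.exp (ρ*(r-t)) * (β*(1+‖x‖^2)) := by ring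
      _ = Real.exp (ρ*(r-t)) * (κ*nrm x) + ε := by rw [h2]
  exact le_of_forall_pos_le_add hx
lemma D2_neg (ψ : Euc d → ℝ) (x u v : Euc d) :
    D2 (fun y => -(ψ y)) x u v = - D2 ψ x u v := by
  unfold D2
  have h1 : (fun y => fderiv ℝ (fun z => -(ψ z)) y v)
      = fun y => -((fun y' => fderiv ℝ ψ y' v) y) := by
    funext y
    rw [fderiv_fun_neg]
    simp
  rw [h1, fderiv_fun_neg]
  simp

lemma Lgen_neg (b : Euc d → Euc q → Euc d) (σ : Euc d → Euc q → (Euc d →L[ℝ] Euc d))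
    (a : Euc q) (φ : ℝ → Euc d → ℝ) (t : ℝ) (x : Euc d) :
    Lgen b σ a (fun t' x' => -(φ t' x')) t x = - Lgen b σ a φ t x := by
  unfold Lgen
  rw [deriv.fun_neg, fderiv_fun_neg]
  simp only [ContinuousLinearMap.neg_apply]
  have h2 : (∑ i : Fin d, D2 (fun x' => -(φ t x')) x
      (σ x a (EuclideanSpace.single i 1)) (σ x a (EuclideanSpace.single i 1)))
      = - ∑ i : Fin d, D2 (φ t) x
      (σ x a (EuclideanSpace.single i 1)) (σ x a (EuclideanSpace.single i 1)) := by
    rw [← Finset.sum_neg_distrib]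
    exact Finset.sum_congr rfl fun i _ => D2_neg (φ t) x _ _
  rw [h2]
  ring

lemma sigmaTGrad_neg (σ : Euc d → Euc q → (Euc d →L[ℝ] Euc d)) (a : Euc q)
    (ψ : Euc d → ℝ) (x : Euc d) :
    sigmaTGrad σ a (fun y => -(ψ y)) x = - sigmaTGrad σ a ψ x := by
  unfold sigmaTGrad
  have h1 : (fun i => fderiv ℝ (fun y => -(ψ y)) x (σ x a (EuclideanSpace.single i 1)))
      = fun i => -(fderiv ℝ ψ x (σ x a (EuclideanSpace.single i 1))) := by
    funext i
    rw [fderiv_fun_neg]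
    simp
  rw [h1]
  exact map_neg _ _

lemma NL_neg (lam : Measure (Euc q)) (w : ℝ → Euc d → Euc q → ℝ) (t : ℝ) (x : Euc d)
    (a : Euc q) :
    NL lam (fun t' x' a' => -(w t' x' a')) t x a = - NL lam w t x a := by
  unfold NL
  rw [← integral_neg]
  congr 1
  funext a'
  ring

lemma neg_subsol {A : Set (Euc q)} {lam : Measure (Euc q)}
    {b : Euc d → Euc q → Euc d} {σ : Euc d → Euc q → (Euc d →L[ℝ] Euc d)}
    {f : Euc d → Euc q → ℝ → Euc d → ℝ} {s r : ℝ} {w : ℝ → Euc d → Euc q → ℝ}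
    (hsup : SupersolIPDE A lam b σ f s r w) :
    SubsolIPDE A lam b σ (fun x a y z => -(f x a (-y) (-z))) s r
      (fun t x a => -(w t x a)) := by
  intro a ha t₀ ht₀ x₀ φ hφ hmax
  have hφ' : ContDiff ℝ (⊤ : ℕ∞) (fun p : ℝ × Euc d => -(φ p.1 p.2)) := hφ.neg
  have hmin : ∀ t ∈ Ico s r, ∀ x : Euc d,
      w t₀ x₀ a - (-(φ t₀ x₀)) ≤ w t x a - (-(φ t x)) := by
    intro t ht x
    have := hmax t ht x
    simp only at this
    linarith
  have h := hsup a ha t₀ ht₀ x₀ (fun t x => -(φ t x)) hφ' hmin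
  have h1 : Lgen b σ a (fun t' x' => -(φ t' x')) t₀ x₀ = - Lgen b σ a φ t₀ x₀ :=
    Lgen_neg b σ a φ t₀ x₀
  have h2 : sigmaTGrad σ a (fun x' => -(φ t₀ x')) x₀ = - sigmaTGrad σ a (φ t₀) x₀ :=
    sigmaTGrad_neg σ a (φ t₀) x₀
  rw [h1] at h
  have h3 : sigmaTGrad σ a ((fun (t' : ℝ) (x' : Euc d) => -(φ t' x')) t₀) x₀
      = - sigmaTGrad σ a (φ t₀) x₀ := h2
  rw [h3] at h
  have h4 : NL lam (fun t' x' a' => -(w t' x' a')) t₀ x₀ a = - NL lam w t₀ x₀ a :=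
    NL_neg lam w t₀ x₀ a
  simp only [neg_neg]
  rw [h4]
  linarith [h]

end Helpers

/-! ## STATEMENT 7 -/

/-- Lemma 4.1 2): uniform linear growth of the family `(ϑ^π)_π`. -/
theorem stmt7 {d q : ℕ} (T : ℝ) (hT : 0 < T)
    (A : Set (Euc q)) (hA : IsCompact A) (hAne : A.Nonempty)
    (lam : Measure (Euc q)) (hfin : IsFiniteMeasure lam) (hlamA : lam Aᶜ = 0)
    (b : Euc d → Euc q → Euc d) (σ : Euc d → Euc q → (Euc d →L[ℝ] Euc d))
    (f : Euc d → Euc q → ℝ → Euc d → ℝ) (g : Euc d → ℝ) (L₁ L₂ : ℝ)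
    (h1 : H1 A b σ L₁) (h2 : H2 A f g L₂)
    (hc : CompPrinciple T A b σ f g)
    (v : ℝ → Euc d → ℝ) (hv : IsHJBSol T A b σ f g v) :
    ∃ C : ℝ, ∀ (n : ℕ) (π : Grid T n) (ϑ : ℝ → Euc d → Euc q → ℝ),
      IsTheta A lam b σ f g π ϑ →
      ∀ t ∈ Icc (0 : ℝ) T, ∀ x : Euc d, ∀ a ∈ A, |ϑ t x a| ≤ C * (1 + ‖x‖) := by
  classical
  obtain ⟨a₀, ha₀⟩ := hAne
  haveI : Nonempty ↥A := ⟨⟨a₀, ha₀⟩⟩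
  -- bound on A
  obtain ⟨R₀, hR₀⟩ := hA.isBounded.subset_closedBall 0
  set R := max R₀ 0 with hRdef
  have hR0 : (0:ℝ) ≤ R := le_max_right _ _
  have hRa : ∀ a ∈ A, ‖a‖ ≤ R := by
    intro a ha
    have := hR₀ ha
    rw [Metric.mem_closedBall, dist_zero_right] at this
    exact le_trans this (le_max_left _ _)
  have haa : ∀ a ∈ A, ∀ a' ∈ A, ‖a - a'‖ ≤ 2*R := by
    intro a ha a' ha'
    calc ‖a - a'‖ ≤ ‖a‖ + ‖a'‖ := norm_sub_le a a'
      _ ≤ 2*R := by linarith [hRa a ha, hRa a' ha']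
  -- Lipschitz constants
  set Lb := max L₁ 0 with hLbdef
  have hLb0 : (0:ℝ) ≤ Lb := le_max_right _ _
  set L := max L₂ 1 with hLdef
  have hL1 : (1:ℝ) ≤ L := le_max_right _ _
  have hL0 : (0:ℝ) ≤ L := by linarith
  -- coefficient bounds
  set B := ‖b 0 a₀‖ + ‖σ 0 a₀‖ + Lb + 2*Lb*R with hBdef
  have hB0 : (0:ℝ) ≤ B := by
    have := norm_nonneg (b 0 a₀)
    have := norm_nonneg (σ 0 a₀)
    have := mul_nonneg (mul_nonneg (by norm_num : (0:ℝ) ≤ 2) hLb0) hR0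
    nlinarith
  have hbB : ∀ x : Euc d, ∀ a ∈ A, ‖b x a‖ ≤ B*(1+‖x‖) := by
    intro x a ha
    have hh := h1 x 0 a ha a₀ ha₀
    rw [sub_zero] at hh
    have h3 : ‖b x a - b 0 a₀‖ ≤ L₁ * (‖x‖ + ‖a - a₀‖) :=
      le_trans (by linarith [norm_nonneg (σ x a - σ 0 a₀)]) hh
    have h4 : L₁ * (‖x‖ + ‖a - a₀‖) ≤ Lb * (‖x‖ + 2*R) := by
      have h5 : L₁ * (‖x‖ + ‖a - a₀‖) ≤ Lb * (‖x‖ + ‖a - a₀‖) :=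
        mul_le_mul_of_nonneg_right (le_max_left _ _)
          (by positivity)
      have h6 : Lb * (‖x‖ + ‖a - a₀‖) ≤ Lb * (‖x‖ + 2*R) :=
        mul_le_mul_of_nonneg_left (by linarith [haa a ha a₀ ha₀]) hLb0
      linarith
    have h7 := norm_sub_norm_le (b x a) (b 0 a₀)
    have h8 : Lb*(‖x‖+2*R) = Lb*‖x‖ + 2*Lb*R := by ring
    have h9 : Lb*‖x‖ ≤ B*‖x‖ := mul_le_mul_of_nonneg_right (by nlinarith [norm_nonneg (b 0 a₀), norm_nonneg (σ 0 a₀), mul_nonneg (mul_nonneg (by norm_num : (0:ℝ) ≤ 2) hLb0) hR0]) (norm_nonneg x)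
    nlinarith [norm_nonneg (σ 0 a₀)]
  have hσB : ∀ x : Euc d, ∀ a ∈ A, ‖σ x a‖ ≤ B*(1+‖x‖) := by
    intro x a ha
    have hh := h1 x 0 a ha a₀ ha₀
    rw [sub_zero] at hh
    have h3 : ‖σ x a - σ 0 a₀‖ ≤ L₁ * (‖x‖ + ‖a - a₀‖) :=
      le_trans (by linarith [norm_nonneg (b x a - b 0 a₀)]) hh
    have h4 : L₁ * (‖x‖ + ‖a - a₀‖) ≤ Lb * (‖x‖ + 2*R) := by
      have h5 : L₁ * (‖x‖ + ‖a - a₀‖) ≤ Lb * (‖x‖ + ‖a - a₀‖) :=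
        mul_le_mul_of_nonneg_right (le_max_left _ _) (by positivity)
      have h6 : Lb * (‖x‖ + ‖a - a₀‖) ≤ Lb * (‖x‖ + 2*R) :=
        mul_le_mul_of_nonneg_left (by linarith [haa a ha a₀ ha₀]) hLb0
      linarith
    have h7 := norm_sub_norm_le (σ x a) (σ 0 a₀)
    have h9 : Lb*‖x‖ ≤ B*‖x‖ := mul_le_mul_of_nonneg_right (by nlinarith [norm_nonneg (b 0 a₀), norm_nonneg (σ 0 a₀), mul_nonneg (mul_nonneg (by norm_num : (0:ℝ) ≤ 2) hLb0) hR0]) (norm_nonneg x)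
    nlinarith [norm_nonneg (b 0 a₀)]
  -- generator bound
  set F₀ := |f 0 a₀ 0 0| with hF₀def
  have hF₀0 : (0:ℝ) ≤ F₀ := abs_nonneg _
  have hfF : ∀ x : Euc d, ∀ a ∈ A, ∀ y : ℝ, ∀ z : Euc d,
      |f x a y z| ≤ F₀ + L*(‖x‖ + 2*R + |y| + ‖z‖) := by
    intro x a ha y z
    have hh := h2 x 0 a ha a₀ ha₀ y 0 z 0
    rw [sub_zero, sub_zero, sub_zero] at hh
    have h3 : |f x a y z - f 0 a₀ 0 0| ≤ L₂ * (‖x‖ + ‖a - a₀‖ + |y| + ‖z‖) :=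
      le_trans (by linarith [abs_nonneg (g x - g 0)]) hh
    have h4 : L₂ * (‖x‖ + ‖a - a₀‖ + |y| + ‖z‖) ≤ L * (‖x‖ + 2*R + |y| + ‖z‖) := by
      have h5 : L₂ * (‖x‖ + ‖a - a₀‖ + |y| + ‖z‖) ≤ L * (‖x‖ + ‖a - a₀‖ + |y| + ‖z‖) :=
        mul_le_mul_of_nonneg_right (le_max_left _ _) (by positivity)
      have h6 : L * (‖x‖ + ‖a - a₀‖ + |y| + ‖z‖) ≤ L * (‖x‖ + 2*R + |y| + ‖z‖) :=
        mul_le_mul_of_nonneg_left (by linarith [haa a ha a₀ ha₀]) hL0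
      linarith
    have h7 := abs_sub_abs_le_abs_sub (f x a y z) (f 0 a₀ 0 0)
    linarith
  -- terminal function bound
  set K := |g 0| + L with hKdef
  have hK1 : (1:ℝ) ≤ K := by have := abs_nonneg (g 0); linarith
  have hK0 : (0:ℝ) ≤ K := by linarith
  have hgK : ∀ x : Euc d, |g x| ≤ K * nrm x := by
    intro x
    have hh := h2 x 0 a₀ ha₀ a₀ ha₀ 0 0 0 0
    rw [sub_zero] at hh
    have h3 : |g x - g 0| ≤ L₂ * ‖x‖ := by
      have h4 := abs_nonneg (f x a₀ 0 0 - f 0 a₀ 0 0)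
      have h5 : L₂ * (‖x‖ + ‖a₀ - a₀‖ + |(0:ℝ) - 0| + ‖(0:Euc d) - 0‖) = L₂ * ‖x‖ := by
        simp
      linarith [hh, h5.symm.le]
    have h6 : L₂ * ‖x‖ ≤ L * ‖x‖ := mul_le_mul_of_nonneg_right (le_max_left _ _) (norm_nonneg x)
    have h7 := abs_sub_abs_le_abs_sub (g x) (g 0)
    have h8 : ‖x‖ ≤ nrm x := norm_le_nrm x
    have h9 : 1 ≤ nrm x := one_le_nrm x
    nlinarith [abs_nonneg (g 0)]
  -- the uniform exponent
  set ρ := 4*B + 4*(d:ℝ)*B^2 + F₀ + 2*L*R + 2*L + 4*Real.sqrt d*B*L + 1 with hρdef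
  have hρle : 4*B + 4*(d:ℝ)*B^2 + F₀ + 2*L*R + 2*L + 4*Real.sqrt d*B*L + 1 ≤ ρ := le_refl _
  have hρ0 : (0:ℝ) ≤ ρ := by
    have hsqd : (0:ℝ) ≤ Real.sqrt d := Real.sqrt_nonneg _
    have hd0 : (0:ℝ) ≤ (d:ℝ) := Nat.cast_nonneg d
    have hLR : 0 ≤ L*R := mul_nonneg hL0 hR0
    have hdB : 0 ≤ (d:ℝ)*B^2 := mul_nonneg hd0 (sq_nonneg B)
    have hsBL : 0 ≤ Real.sqrt d*B*L := mul_nonneg (mul_nonneg hsqd hB0) hL0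
    linarith
  refine ⟨Real.exp (ρ*T) * K, ?_⟩
  intro n π ϑ hϑ
  have hmono := π.mono.monotone
  have htleT : ∀ j : Fin (n+1), π.t j ≤ T := by
    intro j
    calc π.t j ≤ π.t (Fin.last n) := hmono (Fin.le_last j)
      _ = T := π.hT
  have ht0le : ∀ j : Fin (n+1), 0 ≤ π.t j := by
    intro j
    calc (0:ℝ) = π.t 0 := π.h0.symm
      _ ≤ π.t j := hmono (Fin.zero_le j)
  -- downward induction over the grid
  have claim : ∀ j : ℕ, j ≤ n → ∀ t ∈ Icc (π.t ⟨n-j, by omega⟩) T, ∀ x : Euc d, ∀ a ∈ A,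
      |ϑ t x a| ≤ Real.exp (ρ*(T-t)) * (K * nrm x) := by
    intro j
    induction j with
    | zero =>
      intro hj t ht x a ha
      have hnn : π.t ⟨n-0, by omega⟩ = T := by
        have : (⟨n-0, by omega⟩ : Fin (n+1)) = Fin.last n := by
          apply Fin.ext; simp [Fin.last]
        rw [this, π.hT]
      rw [hnn] at ht
      have htT : t = T := le_antisymm ht.2 ht.1
      rw [htT, hϑ.terminal x a ha]
      have h2 : Real.exp (ρ*(T-T)) = 1 := by rw [sub_self, mul_zero, Real.exp_zero]
      rw [h2, one_mul]
      exact hgK x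
    | succ j ih =>
      intro hj t ht x a ha
      have hjn : j ≤ n := Nat.le_of_succ_le hj
      have hkn : n - (j+1) < n := by omega
      set kF : Fin n := ⟨n - (j+1), hkn⟩ with hkF
      obtain ⟨w, hw, hww⟩ := hϑ.sol kF
      have hsr : π.t kF.castSucc ≤ π.t kF.succ := (π.mono (Fin.castSucc_lt_succ (i := kF))).le
      have hrT : π.t kF.succ ≤ T := htleT _
      have hr0 : 0 ≤ π.t kF.succ := ht0le _
      -- identify endpoints with the induction indices
      have hidx : (⟨n-j, by omega⟩ : Fin (n+1)) = kF.succ := by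
        apply Fin.ext
        simp [hkF, Fin.succ]
        omega
      have hidx2 : (⟨n-(j+1), by omega⟩ : Fin (n+1)) = kF.castSucc := by
        apply Fin.ext
        simp [hkF, Fin.castSucc, Fin.castAdd, Fin.castLE]
      have ihr := ih hjn
      rw [hidx] at ihr
      rw [hidx2] at ht
      -- κ'
      set κ' := Real.exp (ρ*(T - π.t kF.succ)) * K with hκ'def
      have hexpr1 : 1 ≤ Real.exp (ρ*(T - π.t kF.succ)) :=
        Real.one_le_exp (mul_nonneg hρ0 (by linarith))
      have hκ'1 : 1 ≤ κ' := by
        rw [hκ'def]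
        have h9 := mul_le_mul hexpr1 hK1 zero_le_one
          (by linarith : (0:ℝ) ≤ Real.exp (ρ*(T - π.t kF.succ)))
        linarith only [h9]
    -- terminal bounds for the sup
      have hsolterm : ∀ x' : Euc d, ∀ a' ∈ A, w (π.t kF.succ) x' a'
          = ⨆ a'' : A, ϑ (π.t kF.succ) x' ↑a'' := hw.terminal
      have hbndAbove : ∀ x' : Euc d, ∀ a'' : A, ϑ (π.t kF.succ) x' ↑a'' ≤ κ' * nrm x' := by
        intro x' a''
        have h1 := (abs_le.1 (ihr (π.t kF.succ) ⟨le_refl _, hrT⟩ x' ↑a'' a''.2)).2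
        rw [hκ'def]
        calc ϑ (π.t kF.succ) x' ↑a'' ≤ Real.exp (ρ*(T - π.t kF.succ)) * (K * nrm x') := h1
          _ = Real.exp (ρ*(T - π.t kF.succ)) * K * nrm x' := by ring
      have hterm_ub : ∀ x' : Euc d, ∀ a' ∈ A, w (π.t kF.succ) x' a' ≤ κ' * nrm x' := by
        intro x' a' ha'
        rw [hsolterm x' a' ha']
        exact ciSup_le (fun a'' => hbndAbove x' a'')
      have hterm_lb : ∀ x' : Euc d, ∀ a' ∈ A,
          (fun t' x'' a'' => -(w t' x'' a'')) (π.t kF.succ) x' a' ≤ κ' * nrm x' := by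
        intro x' a' ha'
        simp only
        rw [hsolterm x' a' ha']
        have hbdd : BddAbove (Set.range fun a'' : A => ϑ (π.t kF.succ) x' ↑a'') := by
          refine ⟨κ' * nrm x', ?_⟩
          rintro _ ⟨a'', rfl⟩
          exact hbndAbove x' a''
        have h1 := le_ciSup hbdd (⟨a₀, ha₀⟩ : A)
        have h2 := (abs_le.1 (ihr (π.t kF.succ) ⟨le_refl _, hrT⟩ x' a₀ ha₀)).1
        have h3 : -(κ' * nrm x') ≤ ϑ (π.t kF.succ) x' a₀ := by
          rw [hκ'def]
          calc -(Real.exp (ρ*(T - π.t kF.succ)) * K * nrm x')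
              = -(Real.exp (ρ*(T - π.t kF.succ)) * (K * nrm x')) := by ring
            _ ≤ ϑ (π.t kF.succ) x' a₀ := h2
        linarith
      -- apply keyUB to w and -w
      have hup := keyUB hA ha₀ hlamA hB0 hL1 hR0 hF₀0 hbB hσB hfF hρle hsr
        hw.cont hw.growth hw.subsol hκ'1 hterm_ub
      have hcont' : ContinuousOn
          (fun p : ℝ × Euc d × Euc q => (fun t' x'' a'' => -(w t' x'' a'')) p.1 p.2.1 p.2.2)
          (Icc (π.t kF.castSucc) (π.t kF.succ) ×ˢ (univ : Set (Euc d)) ×ˢ A) := hw.cont.neg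
      have hgrow' : ∃ C', ∀ t' ∈ Icc (π.t kF.castSucc) (π.t kF.succ), ∀ x' : Euc d, ∀ a' ∈ A,
          |(fun t'' x'' a'' => -(w t'' x'' a'')) t' x' a'| ≤ C' * (1+‖x'‖) := by
        obtain ⟨C', hC'⟩ := hw.growth
        exact ⟨C', fun t' ht' x' a' ha' => by simpa [abs_neg] using hC' t' ht' x' a' ha'⟩
      have hfF' : ∀ x' : Euc d, ∀ a' ∈ A, ∀ y : ℝ, ∀ z : Euc d,
          |(fun x'' a'' y' z' => -(f x'' a'' (-y') (-z'))) x' a' y z|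
            ≤ F₀ + L*(‖x'‖ + 2*R + |y| + ‖z‖) := by
        intro x' a' ha' y z
        simp only [abs_neg]
        have := hfF x' a' ha' (-y) (-z)
        simpa [abs_neg, norm_neg] using this
      have hdn := keyUB hA ha₀ hlamA hB0 hL1 hR0 hF₀0 hbB hσB hfF' hρle hsr
        hcont' hgrow' (neg_subsol hw.supersol) hκ'1 hterm_lb
      rcases lt_or_ge t (π.t kF.succ) with hlt | hge
      · have htIco : t ∈ Ico (π.t kF.castSucc) (π.t kF.succ) := ⟨ht.1, hlt⟩
        have heq := hww t htIco x a ha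
        rw [heq]
        have hb1 := hup t ⟨ht.1, hlt.le⟩ x a ha
        have hb2 := hdn t ⟨ht.1, hlt.le⟩ x a ha
        have hexp : Real.exp (ρ*(π.t kF.succ - t)) * (κ' * nrm x)
            = Real.exp (ρ*(T-t)) * (K * nrm x) := by
          rw [hκ'def]
          have h3 : Real.exp (ρ*(π.t kF.succ - t)) * Real.exp (ρ*(T - π.t kF.succ))
              = Real.exp (ρ*(T-t)) := by
            rw [← Real.exp_add]
            congr 1
            ring
          calc Real.exp (ρ*(π.t kF.succ - t)) * (Real.exp (ρ*(T - π.t kF.succ)) * K * nrm x)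
              = (Real.exp (ρ*(π.t kF.succ - t)) * Real.exp (ρ*(T - π.t kF.succ))) * (K * nrm x) := by
                ring
            _ = Real.exp (ρ*(T-t)) * (K * nrm x) := by rw [h3]
        rw [abs_le]
        constructor
        · rw [← hexp]; linarith
        · rw [← hexp]; linarith
      · exact ihr t ⟨hge, ht.2⟩ x a ha
  -- conclude
  intro t ht x a ha
  have h0idx : (⟨n-n, by omega⟩ : Fin (n+1)) = 0 := by
    apply Fin.ext; simp
  have hc1 := claim n (le_refl n)
  rw [h0idx, π.h0] at hc1
  have h := hc1 t ht x a ha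
  have h2 : Real.exp (ρ*(T-t)) ≤ Real.exp (ρ*T) :=
    Real.exp_le_exp.2 (mul_le_mul_of_nonneg_left (by linarith [ht.1]) hρ0)
  have h3 : nrm x ≤ 1+‖x‖ := nrm_le x
  have h4 : K * nrm x ≤ K * (1+‖x‖) := mul_le_mul_of_nonneg_left h3 hK0
  have h5 : Real.exp (ρ*(T-t)) * (K * nrm x) ≤ Real.exp (ρ*T) * (K * (1+‖x‖)) := by
    apply mul_le_mul h2 h4 (mul_nonneg hK0 (nrm_pos x).le) (Real.exp_pos _).le
  calc |ϑ t x a| ≤ Real.exp (ρ*(T-t)) * (K * nrm x) := h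
    _ ≤ Real.exp (ρ*T) * (K * (1+‖x‖)) := h5
    _ = Real.exp (ρ*T) * K * (1+‖x‖) := by ring


end HJBPaper
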